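/- arXiv:2004.00897 — 6 statements merged into one kernel-verified Lean document; each statement's English description precedes it below -/
import Mathlib

section
/- Let H be a real Hilbert space, X ⊆ H a nonempty closed convex set, and let x, x* ∈ X, τ, g ∈ H, β₁ ∈ [0,1), α > 0, v̂ > 0. Set m = β₁ • τ + (1−β₁) • g and y = x − (α/√v̂) • m, and let x' ∈ X be a nearest point of X to y, i.e. ‖x' − y‖ ≤ ‖z − y‖ for all z ∈ X. Then ⟨−g, x* − x⟩ ≤ (√v̂ / (2α(1−β₁)))(‖x − x*‖² − ‖x' − x*‖²) + (α / (2√v̂ (1−β₁))) ‖m‖² + (β₁/(1−β₁)) ⟨τ, x* − x⟩. -/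
open scoped RealInnerProductSpace

/-- The per-iteration inequality (equation (6) of the paper) specialized to a Hilbert space:
`m` is the momentum update, `y` the gradient step, and `x'` the metric projection of `y`
onto the closed convex constraint set `X`. -/
theorem stmt2 {H : Type*} [NormedAddCommGroup H] [InnerProductSpace ℝ H] [CompleteSpace H]
    (X : Set H) (hXne : X.Nonempty) (hXcl : IsClosed X) (hXcv : Convex ℝ X)
    (x xs : H) (hx : x ∈ X) (hxs : xs ∈ X)
    (τ g : H) (β₁ : ℝ) (hβ₁ : β₁ ∈ Set.Ico (0 : ℝ) 1)
    (α : ℝ) (hα : 0 < α) (vhat : ℝ) (hvhat : 0 < vhat)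
    (m y : H) (hm : m = β₁ • τ + (1 - β₁) • g)
    (hy : y = x - (α / Real.sqrt vhat) • m)
    (x' : H) (hx' : x' ∈ X) (hproj : ∀ z ∈ X, ‖x' - y‖ ≤ ‖z - y‖) :
    ⟪-g, xs - x⟫ ≤ (Real.sqrt vhat / (2 * α * (1 - β₁))) * (‖x - xs‖ ^ 2 - ‖x' - xs‖ ^ 2)
      + (α / (2 * Real.sqrt vhat * (1 - β₁))) * ‖m‖ ^ 2
      + (β₁ / (1 - β₁)) * ⟪τ, xs - x⟫ := by
  obtain ⟨hβ0, hβ1⟩ := hβ₁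
  have hb : (0:ℝ) < 1 - β₁ := by linarith
  have hs : 0 < Real.sqrt vhat := Real.sqrt_pos.mpr hvhat
  set c := α / Real.sqrt vhat with hcdef
  have hc : 0 < c := div_pos hα hs
  haveI : Nonempty X := ⟨⟨x', hx'⟩⟩
  have hinf : ‖y - x'‖ = ⨅ w : X, ‖y - w‖ := by
    apply le_antisymm
    · exact le_ciInf fun w => by
        rw [norm_sub_rev y x', norm_sub_rev y w]; exact hproj w w.2
    · have bdd : BddBelow (Set.range fun w : X => ‖y - (w : H)‖) := by
        refine ⟨0, ?_⟩; rintro r ⟨w, rfl⟩; positivity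
      exact ciInf_le bdd ⟨x', hx'⟩
  have hip : ⟪y - x', xs - x'⟫ ≤ 0 :=
    (norm_eq_iInf_iff_real_inner_le_zero hXcv hx').mp hinf xs hxs
  have h1 : ‖x' - xs‖ ^ 2 ≤ ‖y - xs‖ ^ 2 := by
    have e : y - xs = (y - x') - (xs - x') := by abel
    have := norm_sub_sq_real (y - x') (xs - x')
    rw [← e] at this
    rw [norm_sub_rev x' xs]
    nlinarith [norm_nonneg (y - x'), sq_nonneg ‖y - x'‖]
  have h2 : ‖y - xs‖ ^ 2 = ‖x - xs‖ ^ 2 + 2 * c * (β₁ * ⟪τ, xs - x⟫ + (1 - β₁) * ⟪g, xs - x⟫)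
      + c ^ 2 * ‖m‖ ^ 2 := by
    have e : y - xs = (x - xs) - c • m := by rw [hy]; abel
    rw [e, norm_sub_sq_real, real_inner_smul_right, norm_smul, hm]
    have : ⟪x - xs, β₁ • τ + (1 - β₁) • g⟫
        = β₁ * ⟪τ, x - xs⟫ + (1 - β₁) * ⟪g, x - xs⟫ := by
      rw [inner_add_right, real_inner_smul_right, real_inner_smul_right,
        real_inner_comm τ, real_inner_comm g]
    rw [this]
    have et : ⟪τ, x - xs⟫ = -⟪τ, xs - x⟫ := by rw [← inner_neg_right]; congr 1; abel
    have eg : ⟪g, x - xs⟫ = -⟪g, xs - x⟫ := by rw [← inner_neg_right]; congr 1; abel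
    rw [et, eg, Real.norm_eq_abs, abs_of_pos hc]
    ring
  have key : ‖x - xs‖ ^ 2 - ‖x' - xs‖ ^ 2 + 2 * c * β₁ * ⟪τ, xs - x⟫
      + 2 * c * (1 - β₁) * ⟪g, xs - x⟫ + c ^ 2 * ‖m‖ ^ 2 ≥ 0 := by
    nlinarith [h1, h2]
  have hg : ⟪-g, xs - x⟫ = -⟪g, xs - x⟫ := inner_neg_left g (xs - x)
  have e1 : Real.sqrt vhat / (2 * α * (1 - β₁)) = 1 / (2 * c * (1 - β₁)) := by
    rw [hcdef]; field_simp
  have e2 : α / (2 * Real.sqrt vhat * (1 - β₁)) = c / (2 * (1 - β₁)) := by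
    rw [hcdef, div_div]; congr 1; ring
  rw [hg, e1, e2, ← sub_nonneg]
  have expr : 1 / (2 * c * (1 - β₁)) * (‖x - xs‖ ^ 2 - ‖x' - xs‖ ^ 2)
      + c / (2 * (1 - β₁)) * ‖m‖ ^ 2 + β₁ / (1 - β₁) * ⟪τ, xs - x⟫ - -⟪g, xs - x⟫
      = (1 / (2 * c * (1 - β₁))) * (‖x - xs‖ ^ 2 - ‖x' - xs‖ ^ 2
        + 2 * c * β₁ * ⟪τ, xs - x⟫ + 2 * c * (1 - β₁) * ⟪g, xs - x⟫ + c ^ 2 * ‖m‖ ^ 2) := by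
    field_simp
    ring
  rw [expr]
  positivity
end

section
/- Let n ≥ 1, N ≥ 1, G ≥ 0, D ≥ 0. Let (β_k)_{k=1}^{n} ⊆ [0,1) be nonincreasing, let (α_k)_{k=1}^{n} be positive reals such that α_k(1−β_k) is nonincreasing in k, and for each i ∈ {1,…,N} let (v̂_k^i)_{k=1}^{n} be nonnegative reals, nondecreasing in k, with √(v̂_k^i) ≤ G. Let d_k^i ∈ [0, D] for k ∈ {1,…,n+1} and i ∈ {1,…,N}. Then ∑_{k=1}^{n} ∑_{i=1}^{N} (√(v̂_k^i) / (2 α_k (1−β_k))) ((d_k^i)² − (d_{k+1}^i)²) ≤ N G D² / (2 α_n (1−β_1)). -/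
/-- The telescoping estimate (equation (9) in the proof of Theorem 1): bounding the
accumulated distance-difference terms of modified RAMSGrad. `vhat k i` are the
running-maximum second-moment terms, `d k i` the distances of the iterates to the
solution in the `i`-th factor, `D` the diameter bound, `G` the gradient bound,
`α` the learning rates, and `β` the momentum parameters. -/
theorem stmt3 (n N : ℕ) (hn : 1 ≤ n) (hN : 1 ≤ N) (G D : ℝ) (hG : 0 ≤ G) (hD : 0 ≤ D)
    (β : ℕ → ℝ) (hβ : ∀ k, 1 ≤ k → k ≤ n → β k ∈ Set.Ico (0 : ℝ) 1)
    (hβmono : ∀ k, 1 ≤ k → k + 1 ≤ n → β (k + 1) ≤ β k)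
    (α : ℕ → ℝ) (hα : ∀ k, 1 ≤ k → k ≤ n → 0 < α k)
    (hαβ : ∀ k, 1 ≤ k → k + 1 ≤ n → α (k + 1) * (1 - β (k + 1)) ≤ α k * (1 - β k))
    (vhat : ℕ → Fin N → ℝ)
    (hvhatnn : ∀ k, 1 ≤ k → k ≤ n → ∀ i, 0 ≤ vhat k i)
    (hvhatmono : ∀ k, 1 ≤ k → k + 1 ≤ n → ∀ i, vhat k i ≤ vhat (k + 1) i)
    (hvhatG : ∀ k, 1 ≤ k → k ≤ n → ∀ i, Real.sqrt (vhat k i) ≤ G)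
    (d : ℕ → Fin N → ℝ)
    (hd : ∀ k, 1 ≤ k → k ≤ n + 1 → ∀ i, d k i ∈ Set.Icc (0 : ℝ) D) :
    ∑ k ∈ Finset.Icc 1 n, ∑ i : Fin N,
        (Real.sqrt (vhat k i) / (2 * α k * (1 - β k))) * ((d k i) ^ 2 - (d (k + 1) i) ^ 2)
      ≤ (N : ℝ) * G * D ^ 2 / (2 * α n * (1 - β 1)) := by
  classical
  set c : ℕ → Fin N → ℝ := fun k i => Real.sqrt (vhat k i) / (2 * α k * (1 - β k)) with hc
  have hβ1 : 0 < 1 - β 1 := by have := (hβ 1 le_rfl hn).2; linarith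
  have hαn := hα n hn le_rfl
  have hden : ∀ k, 1 ≤ k → k ≤ n → 0 < 2 * α k * (1 - β k) := by
    intro k hk hkn
    have h1 := (hβ k hk hkn).2
    have h2 := hα k hk hkn
    nlinarith
  have hcnn : ∀ k, 1 ≤ k → k ≤ n → ∀ i, 0 ≤ c k i := by
    intro k hk hkn i
    exact div_nonneg (Real.sqrt_nonneg _) (hden k hk hkn).le
  have hcmono : ∀ k, 1 ≤ k → k + 1 ≤ n → ∀ i, c k i ≤ c (k + 1) i := by
    intro k hk hkn i
    apply div_le_div₀ (Real.sqrt_nonneg _)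
      (Real.sqrt_le_sqrt (hvhatmono k hk hkn i))
      (hden (k + 1) (by omega) hkn)
    have := hαβ k hk hkn
    linarith
  have hβanti : ∀ b, 1 ≤ b → b ≤ n → β b ≤ β 1 := by
    intro b hb
    induction b, hb using Nat.le_induction with
    | base => intro _; exact le_rfl
    | succ b hb ih =>
      intro hbn
      exact le_trans (hβmono b hb hbn) (ih (by omega))
  -- per-factor telescoping bound
  have key : ∀ i : Fin N, ∀ m, 1 ≤ m → m ≤ n →
      ∑ k ∈ Finset.Icc 1 m, c k i * ((d k i) ^ 2 - (d (k + 1) i) ^ 2)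
        ≤ c m i * (D ^ 2 - (d (m + 1) i) ^ 2) := by
    intro i m hm
    induction m, hm using Nat.le_induction with
    | base =>
      intro hmn
      rw [show Finset.Icc 1 1 = {1} from rfl, Finset.sum_singleton]
      have hd1 := hd 1 le_rfl (by omega) i
      have : (d 1 i) ^ 2 ≤ D ^ 2 := by nlinarith [hd1.1, hd1.2]
      have hc1 := hcnn 1 le_rfl hmn i
      nlinarith
    | succ m hm ih =>
      intro hmn
      rw [Finset.sum_Icc_succ_top (by omega : 1 ≤ m + 1)]
      have hih := ih (by omega)
      have hcm := hcmono m hm hmn i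
      have hdm := hd (m + 1) (by omega) (by omega) i
      have hDd : 0 ≤ D ^ 2 - (d (m + 1) i) ^ 2 := by nlinarith [hdm.1, hdm.2]
      have hcmn := hcnn m hm (by omega) i
      nlinarith
  rw [Finset.sum_comm]
  have hbound : ∀ i : Fin N,
      ∑ k ∈ Finset.Icc 1 n, c k i * ((d k i) ^ 2 - (d (k + 1) i) ^ 2)
        ≤ G * D ^ 2 / (2 * α n * (1 - β 1)) := by
    intro i
    refine le_trans (key i n hn le_rfl) ?_
    have hdn := hd (n + 1) (by omega) le_rfl i
    have hcnN := hcnn n hn le_rfl i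
    have step1 : c n i * (D ^ 2 - (d (n + 1) i) ^ 2) ≤ c n i * D ^ 2 := by
      nlinarith [hdn.1]
    refine le_trans step1 ?_
    have hle : c n i ≤ G / (2 * α n * (1 - β 1)) := by
      apply div_le_div₀ hG (hvhatG n hn le_rfl i) (by positivity)
      have hβn := hβanti n hn le_rfl
      nlinarith
    calc c n i * D ^ 2 ≤ (G / (2 * α n * (1 - β 1))) * D ^ 2 := by nlinarith
      _ = G * D ^ 2 / (2 * α n * (1 - β 1)) := by ring
  calc ∑ i : Fin N, ∑ k ∈ Finset.Icc 1 n, c k i * ((d k i) ^ 2 - (d (k + 1) i) ^ 2)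
      ≤ ∑ _i : Fin N, G * D ^ 2 / (2 * α n * (1 - β 1)) :=
        Finset.sum_le_sum fun i _ => hbound i
    _ = (N : ℝ) * G * D ^ 2 / (2 * α n * (1 - β 1)) := by
        rw [Finset.sum_const, Finset.card_univ, Fintype.card_fin]; ring
end

section
/- Consider the AMSGrad-type iteration in the product of Hilbert spaces described in the context. Then for every n ≥ 1 with α_n > 0 and every choice of points x*^i ∈ X_i (i = 1,…,N): ∑_{k=1}^{n} ∑_{i=1}^{N} ⟨g_k^i, x_k^i − x*^i⟩ ≤ N G D² / (2(1−β_{11}) α_n) + (N G² / (2√ε (1−β_{11}))) ∑_{k=1}^{n} α_k + (N G D / (1−β_{11})) ∑_{k=1}^{n} β_{1k}. -/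
open scoped RealInnerProductSpace

/-- If `p` is a nearest point of the convex set `K` to `u`, then for any `w ∈ K`
we have `‖p - w‖ ≤ ‖u - w‖` (nonexpansiveness of metric projection). -/
private lemma stmt8_proj {F : Type*} [NormedAddCommGroup F] [InnerProductSpace ℝ F]
    {K : Set F} (hK : Convex ℝ K) {u p w : F} (hp : p ∈ K) (hw : w ∈ K)
    (hmin : ∀ z ∈ K, ‖p - u‖ ≤ ‖z - u‖) :
    ‖p - w‖ ≤ ‖u - w‖ := by
  haveI : Nonempty K := ⟨⟨p, hp⟩⟩
  have hbdd : BddBelow (Set.range fun z : K => ‖u - (z : F)‖) :=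
    ⟨0, fun y ⟨z, hz⟩ => hz ▸ norm_nonneg _⟩
  have hinf : ‖u - p‖ = ⨅ z : K, ‖u - (z : F)‖ := by
    refine le_antisymm (le_ciInf fun z => ?_) (ciInf_le hbdd ⟨p, hp⟩)
    rw [norm_sub_rev u p, norm_sub_rev u (z : F)]
    exact hmin z z.2
  have hvar := (norm_eq_iInf_iff_real_inner_le_zero hK hp).1 hinf w hw
  have hsq : ‖p - w‖ ^ 2 ≤ ‖u - w‖ ^ 2 := by
    have h1 : u - w = (u - p) - (w - p) := by abel
    have h2 : p - w = -(w - p) := by abel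
    rw [h1, h2, norm_neg, norm_sub_sq_real (u - p) (w - p)]
    nlinarith [sq_nonneg ‖u - p‖, hvar]
  nlinarith [norm_nonneg (p - w), norm_nonneg (u - w)]

/-- Telescoping bound used in the AMSGrad regret analysis. -/
private lemma stmt8_telescope (c Δ : ℕ → ℝ) (D2 : ℝ)
    (hc0 : ∀ k, 1 ≤ k → 0 ≤ c k)
    (hcmono : ∀ k, 1 ≤ k → c k ≤ c (k + 1))
    (hΔ0 : ∀ k, 1 ≤ k → 0 ≤ Δ k)
    (hΔD : ∀ k, 1 ≤ k → Δ k ≤ D2) :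
    ∀ n, 1 ≤ n → ∑ k ∈ Finset.Icc 1 n, c k * (Δ k - Δ (k + 1)) ≤ c n * (D2 - Δ (n + 1)) := by
  intro n hn
  induction n, hn using Nat.le_induction with
  | base =>
    rw [Finset.Icc_self, Finset.sum_singleton]
    have h1 := hΔD 1 le_rfl
    have h2 := hc0 1 le_rfl
    nlinarith
  | succ n hn ih =>
    rw [Finset.sum_Icc_succ_top (by omega : 1 ≤ n + 1)]
    have hD2 : 0 ≤ D2 - Δ (n + 1) := by
      have := hΔD (n + 1) (by omega); have := hΔ0 (n + 1) (by omega); linarith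
    have h1 : c n * (D2 - Δ (n + 1)) ≤ c (n + 1) * (D2 - Δ (n + 1)) :=
      mul_le_mul_of_nonneg_right (hcmono n hn) hD2
    nlinarith [ih]

set_option maxHeartbeats 2000000 in
/-- The deterministic core of the paper's Theorem 1 for the AMSGrad-type iteration
(Algorithm 1) specialized to a product of Hilbert spaces: `X i` are nonempty closed convex
constraint sets of diameter at most `D`, `g k i` the (stochastic) gradients with norm at
most `G`, `m` the momentum, `v`/`vhat` the second-moment terms (initialized at `ε`), and
`x (k+1) i` the metric projection onto `X i` of the exponential step
`x k i - (α k / √(vhat k i)) • m k i`. -/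
theorem stmt8 (N : ℕ) (hN : 1 ≤ N)
    (H : Fin N → Type*) [∀ i, NormedAddCommGroup (H i)] [∀ i, InnerProductSpace ℝ (H i)]
    [∀ i, CompleteSpace (H i)]
    (X : ∀ i, Set (H i)) (hXne : ∀ i, (X i).Nonempty) (hXcl : ∀ i, IsClosed (X i))
    (hXcv : ∀ i, Convex ℝ (X i))
    (D : ℝ) (hD : 0 ≤ D) (hdiam : ∀ i, ∀ u ∈ X i, ∀ v ∈ X i, ‖u - v‖ ≤ D)
    (G : ℝ) (hG : 0 ≤ G) (ε : ℝ) (hε : 0 < ε) (hεG : ε ≤ G ^ 2)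
    (β₂ : ℝ) (hβ₂ : β₂ ∈ Set.Ico (0 : ℝ) 1)
    (β₁ : ℕ → ℝ) (hβ₁ : ∀ k, 1 ≤ k → β₁ k ∈ Set.Ico (0 : ℝ) 1)
    (hβ₁mono : ∀ k, 1 ≤ k → β₁ (k + 1) ≤ β₁ k)
    (α : ℕ → ℝ) (hα : ∀ k, 1 ≤ k → 0 < α k)
    (hαβ : ∀ k, 1 ≤ k → α (k + 1) * (1 - β₁ (k + 1)) ≤ α k * (1 - β₁ k))
    (g : ℕ → ∀ i, H i) (hg : ∀ k, 1 ≤ k → ∀ i, ‖g k i‖ ≤ G)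
    (m : ℕ → ∀ i, H i) (hm0 : ∀ i, m 0 i = 0)
    (hm : ∀ k : ℕ, ∀ i, m (k + 1) i = β₁ (k + 1) • m k i + (1 - β₁ (k + 1)) • g (k + 1) i)
    (v : ℕ → Fin N → ℝ) (hv0 : ∀ i, v 0 i = 0)
    (hv : ∀ k : ℕ, ∀ i, v (k + 1) i = β₂ * v k i + (1 - β₂) * ‖g (k + 1) i‖ ^ 2)
    (vhat : ℕ → Fin N → ℝ) (hvhat0 : ∀ i, vhat 0 i = ε)
    (hvhat : ∀ k : ℕ, ∀ i, vhat (k + 1) i = max (vhat k i) (v (k + 1) i))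
    (x : ℕ → ∀ i, H i) (hx1 : ∀ i, x 1 i ∈ X i)
    (hxX : ∀ k, 1 ≤ k → ∀ i, x (k + 1) i ∈ X i)
    (hxproj : ∀ k, 1 ≤ k → ∀ i, ∀ z ∈ X i,
      ‖x (k + 1) i - (x k i - (α k / Real.sqrt (vhat k i)) • m k i)‖
        ≤ ‖z - (x k i - (α k / Real.sqrt (vhat k i)) • m k i)‖)
    (n : ℕ) (hn : 1 ≤ n) (xs : ∀ i, H i) (hxs : ∀ i, xs i ∈ X i) :
    ∑ k ∈ Finset.Icc 1 n, ∑ i : Fin N, ⟪g k i, x k i - xs i⟫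
      ≤ (N : ℝ) * G * D ^ 2 / (2 * (1 - β₁ 1) * α n)
        + ((N : ℝ) * G ^ 2 / (2 * Real.sqrt ε * (1 - β₁ 1)))
            * ∑ k ∈ Finset.Icc 1 n, α k
        + ((N : ℝ) * G * D / (1 - β₁ 1)) * ∑ k ∈ Finset.Icc 1 n, β₁ k := by
  obtain ⟨hβ₂0, hβ₂1⟩ := hβ₂
  have hβ₁1 := hβ₁ 1 le_rfl
  have h1β : 0 < 1 - β₁ 1 := sub_pos.2 hβ₁1.2
  have hsε : 0 < Real.sqrt ε := Real.sqrt_pos.2 hε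
  have hG2 : (0 : ℝ) ≤ G ^ 2 := sq_nonneg G
  have hαn := hα n hn
  have hβle1 : ∀ k, 1 ≤ k → β₁ k ≤ β₁ 1 := by
    intro k hk
    induction k, hk using Nat.le_induction with
    | base => exact le_rfl
    | succ k hk ih => exact le_trans (hβ₁mono k hk) ih
  have hb : ∀ k, 1 ≤ k → 0 < 1 - β₁ k := fun k hk => sub_pos.2 (hβ₁ k hk).2
  have hβnn : ∀ k, 1 ≤ k → 0 ≤ β₁ k := fun k hk => (hβ₁ k hk).1
  have hxmem : ∀ k, 1 ≤ k → ∀ i, x k i ∈ X i := by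
    intro k hk i
    match k, hk with
    | 1, _ => exact hx1 i
    | (j + 2), _ => exact hxX (j + 1) (by omega) i
  have hmb : ∀ k, ∀ i : Fin N, ‖m k i‖ ≤ G := by
    intro k
    induction k with
    | zero => intro i; simp [hm0 i, hG]
    | succ k ih =>
      intro i
      have hb1 := hβ₁ (k + 1) (by omega)
      rw [hm k i]
      calc ‖β₁ (k + 1) • m k i + (1 - β₁ (k + 1)) • g (k + 1) i‖
          ≤ ‖β₁ (k + 1) • m k i‖ + ‖(1 - β₁ (k + 1)) • g (k + 1) i‖ := norm_add_le _ _
        _ = β₁ (k + 1) * ‖m k i‖ + (1 - β₁ (k + 1)) * ‖g (k + 1) i‖ := by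
            rw [norm_smul, norm_smul, Real.norm_eq_abs, Real.norm_eq_abs,
              abs_of_nonneg hb1.1, abs_of_nonneg (by linarith [hb1.2])]
        _ ≤ β₁ (k + 1) * G + (1 - β₁ (k + 1)) * G :=
            add_le_add (mul_le_mul_of_nonneg_left (ih i) hb1.1)
              (mul_le_mul_of_nonneg_left (hg (k + 1) (by omega) i) (by linarith [hb1.2]))
        _ = G := by ring
  have hvb : ∀ k, ∀ i : Fin N, v k i ≤ G ^ 2 := by
    intro k
    induction k with
    | zero => intro i; rw [hv0 i]; exact hG2
    | succ k ih =>
      intro i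
      rw [hv k i]
      have hgb : ‖g (k + 1) i‖ ^ 2 ≤ G ^ 2 := by
        have := hg (k + 1) (by omega) i
        nlinarith [norm_nonneg (g (k + 1) i)]
      nlinarith [ih i]
  have hvhat_lb : ∀ k, ∀ i : Fin N, ε ≤ vhat k i := by
    intro k
    induction k with
    | zero => intro i; rw [hvhat0 i]
    | succ k ih => intro i; rw [hvhat k i]; exact le_trans (ih i) (le_max_left _ _)
  have hvhat_mono : ∀ k, ∀ i : Fin N, vhat k i ≤ vhat (k + 1) i := by
    intro k i; rw [hvhat k i]; exact le_max_left _ _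
  have hvhat_ub : ∀ k, ∀ i : Fin N, vhat k i ≤ G ^ 2 := by
    intro k
    induction k with
    | zero => intro i; rw [hvhat0 i]; exact hεG
    | succ k ih => intro i; rw [hvhat k i]; exact max_le (ih i) (hvb (k + 1) i)
  have hs_pos : ∀ k, ∀ i : Fin N, 0 < Real.sqrt (vhat k i) :=
    fun k i => Real.sqrt_pos.2 (lt_of_lt_of_le hε (hvhat_lb k i))
  have hs_lb : ∀ k, ∀ i : Fin N, Real.sqrt ε ≤ Real.sqrt (vhat k i) :=
    fun k i => Real.sqrt_le_sqrt (hvhat_lb k i)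
  have hs_ub : ∀ k, ∀ i : Fin N, Real.sqrt (vhat k i) ≤ G := by
    intro k i
    calc Real.sqrt (vhat k i) ≤ Real.sqrt (G ^ 2) := Real.sqrt_le_sqrt (hvhat_ub k i)
      _ = G := Real.sqrt_sq hG
  have hdist : ∀ k, 1 ≤ k → ∀ i, ‖x k i - xs i‖ ≤ D :=
    fun k hk i => hdiam i _ (hxmem k hk i) _ (hxs i)
  -- key per-step inequality
  have key : ∀ i : Fin N, ∀ k, 1 ≤ k →
      ⟪g k i, x k i - xs i⟫ ≤
        Real.sqrt (vhat k i) / (α k * (1 - β₁ k))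
            * (‖x k i - xs i‖ ^ 2 - ‖x (k + 1) i - xs i‖ ^ 2) / 2
        + α k * (G ^ 2 / (2 * Real.sqrt ε * (1 - β₁ 1)))
        + β₁ k * (G * D / (1 - β₁ 1)) := by
    intro i k hk
    obtain ⟨j, rfl⟩ : ∃ j, k = j + 1 := ⟨k - 1, by omega⟩
    have hαk := hα (j + 1) (by omega)
    have hbk := hb (j + 1) (by omega)
    have hβk := hβnn (j + 1) (by omega)
    have hβ1k : 1 - β₁ 1 ≤ 1 - β₁ (j + 1) := by linarith [hβle1 (j + 1) (by omega)]
    have hproj := stmt8_proj (hXcv i) (hxX (j + 1) (by omega) i) (hxs i)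
      (hxproj (j + 1) (by omega) i)
    have hslb := hs_lb (j + 1) i
    have hsub := hs_ub (j + 1) i
    have hs0 := hs_pos (j + 1) i
    set s := Real.sqrt (vhat (j + 1) i) with hs_def
    set t := α (j + 1) / s with ht_def
    clear_value t s
    have ht0 : 0 < t := ht_def ▸ div_pos hαk hs0
    have hp2 : ‖x (j + 1 + 1) i - xs i‖ ^ 2
        ≤ ‖(x (j + 1) i - t • m (j + 1) i) - xs i‖ ^ 2 :=
      pow_le_pow_left₀ (norm_nonneg _) hproj 2
    have hexp : ‖(x (j + 1) i - t • m (j + 1) i) - xs i‖ ^ 2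
        = ‖x (j + 1) i - xs i‖ ^ 2 - 2 * t * ⟪m (j + 1) i, x (j + 1) i - xs i⟫
          + t ^ 2 * ‖m (j + 1) i‖ ^ 2 := by
      have hre : (x (j + 1) i - t • m (j + 1) i) - xs i
          = (x (j + 1) i - xs i) - t • m (j + 1) i := by abel
      rw [hre, norm_sub_sq_real, real_inner_smul_right, norm_smul, Real.norm_eq_abs,
        mul_pow, sq_abs, real_inner_comm]
      ring
    have hmsq : ‖m (j + 1) i‖ ^ 2 ≤ G ^ 2 := by
      nlinarith [hmb (j + 1) i, norm_nonneg (m (j + 1) i)]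
    have h1 : 2 * t * ⟪m (j + 1) i, x (j + 1) i - xs i⟫
        ≤ ‖x (j + 1) i - xs i‖ ^ 2 - ‖x (j + 1 + 1) i - xs i‖ ^ 2 + t ^ 2 * G ^ 2 := by
      nlinarith [hp2, hexp, mul_le_mul_of_nonneg_left hmsq (sq_nonneg t)]
    have hBsplit : ⟪m (j + 1) i, x (j + 1) i - xs i⟫
        = β₁ (j + 1) * ⟪m j i, x (j + 1) i - xs i⟫
          + (1 - β₁ (j + 1)) * ⟪g (j + 1) i, x (j + 1) i - xs i⟫ := by
      rw [hm j i, inner_add_left, real_inner_smul_left, real_inner_smul_left]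
    rw [hBsplit] at h1
    have hC : -⟪m j i, x (j + 1) i - xs i⟫ ≤ G * D := by
      have habs := abs_real_inner_le_norm (m j i) (x (j + 1) i - xs i)
      have h2 : ‖m j i‖ * ‖x (j + 1) i - xs i‖ ≤ G * D :=
        mul_le_mul (hmb j i) (hdist (j + 1) (by omega) i) (norm_nonneg _) hG
      linarith [neg_le_abs ⟪m j i, x (j + 1) i - xs i⟫, neg_abs_le ⟪m j i, x (j + 1) i - xs i⟫]
    have hmul := mul_le_mul_of_nonneg_left hC
      (by positivity : (0 : ℝ) ≤ 2 * t * β₁ (j + 1))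
    have h3 : 2 * t * (1 - β₁ (j + 1)) * ⟪g (j + 1) i, x (j + 1) i - xs i⟫
        ≤ (‖x (j + 1) i - xs i‖ ^ 2 - ‖x (j + 1 + 1) i - xs i‖ ^ 2) + t ^ 2 * G ^ 2
          + 2 * t * β₁ (j + 1) * (G * D) := by linarith [h1, hmul]
    -- now compare term by term after multiplying the goal by 2 * t * (1 - β₁ (j+1))
    have hP : (0 : ℝ) < 2 * t * (1 - β₁ (j + 1)) := by positivity
    have heq1 : 2 * t * (1 - β₁ (j + 1))
          * (s / (α (j + 1) * (1 - β₁ (j + 1)))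
              * (‖x (j + 1) i - xs i‖ ^ 2 - ‖x (j + 1 + 1) i - xs i‖ ^ 2) / 2)
        = ‖x (j + 1) i - xs i‖ ^ 2 - ‖x (j + 1 + 1) i - xs i‖ ^ 2 := by
      rw [ht_def]
      field_simp
    have h1le : 1 ≤ (1 - β₁ (j + 1)) / (1 - β₁ 1) := (one_le_div h1β).2 hβ1k
    have hineq2 : t ^ 2 * G ^ 2
        ≤ 2 * t * (1 - β₁ (j + 1)) * (α (j + 1) * (G ^ 2 / (2 * Real.sqrt ε * (1 - β₁ 1)))) := by
      have e0 : t ≤ α (j + 1) / Real.sqrt ε := by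
        rw [ht_def]; exact div_le_div_of_nonneg_left hαk.le hsε hslb
      have e1 : t * t * G ^ 2 ≤ t * (α (j + 1) / Real.sqrt ε) * G ^ 2 :=
        mul_le_mul_of_nonneg_right (mul_le_mul_of_nonneg_left e0 ht0.le) hG2
      have hq : 2 * t * (1 - β₁ (j + 1)) * (α (j + 1) * (G ^ 2 / (2 * Real.sqrt ε * (1 - β₁ 1))))
          = (t * (α (j + 1) / Real.sqrt ε) * G ^ 2) * ((1 - β₁ (j + 1)) / (1 - β₁ 1)) := by
        field_simp [hsε.ne', h1β.ne']
      have hnn : 0 ≤ t * (α (j + 1) / Real.sqrt ε) * G ^ 2 := by positivity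
      calc t ^ 2 * G ^ 2 = t * t * G ^ 2 := by ring
        _ ≤ t * (α (j + 1) / Real.sqrt ε) * G ^ 2 := e1
        _ ≤ (t * (α (j + 1) / Real.sqrt ε) * G ^ 2) * ((1 - β₁ (j + 1)) / (1 - β₁ 1)) :=
            le_mul_of_one_le_right hnn h1le
        _ = _ := hq.symm
    have hineq3 : 2 * t * β₁ (j + 1) * (G * D)
        ≤ 2 * t * (1 - β₁ (j + 1)) * (β₁ (j + 1) * (G * D / (1 - β₁ 1))) := by
      have hq : 2 * t * (1 - β₁ (j + 1)) * (β₁ (j + 1) * (G * D / (1 - β₁ 1)))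
          = (2 * t * β₁ (j + 1) * (G * D)) * ((1 - β₁ (j + 1)) / (1 - β₁ 1)) := by
        field_simp [h1β.ne']
      have hnn : 0 ≤ 2 * t * β₁ (j + 1) * (G * D) := by positivity
      rw [hq]
      exact le_mul_of_one_le_right hnn h1le
    have hdistr : 2 * t * (1 - β₁ (j + 1))
          * (s / (α (j + 1) * (1 - β₁ (j + 1)))
              * (‖x (j + 1) i - xs i‖ ^ 2 - ‖x (j + 1 + 1) i - xs i‖ ^ 2) / 2
            + α (j + 1) * (G ^ 2 / (2 * Real.sqrt ε * (1 - β₁ 1)))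
            + β₁ (j + 1) * (G * D / (1 - β₁ 1)))
        = 2 * t * (1 - β₁ (j + 1))
            * (s / (α (j + 1) * (1 - β₁ (j + 1)))
                * (‖x (j + 1) i - xs i‖ ^ 2 - ‖x (j + 1 + 1) i - xs i‖ ^ 2) / 2)
          + 2 * t * (1 - β₁ (j + 1)) * (α (j + 1) * (G ^ 2 / (2 * Real.sqrt ε * (1 - β₁ 1))))
          + 2 * t * (1 - β₁ (j + 1)) * (β₁ (j + 1) * (G * D / (1 - β₁ 1))) := by ring
    have hfin : 2 * t * (1 - β₁ (j + 1)) * ⟪g (j + 1) i, x (j + 1) i - xs i⟫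
        ≤ 2 * t * (1 - β₁ (j + 1))
            * (s / (α (j + 1) * (1 - β₁ (j + 1)))
                * (‖x (j + 1) i - xs i‖ ^ 2 - ‖x (j + 1 + 1) i - xs i‖ ^ 2) / 2
              + α (j + 1) * (G ^ 2 / (2 * Real.sqrt ε * (1 - β₁ 1)))
              + β₁ (j + 1) * (G * D / (1 - β₁ 1))) := by
      rw [hdistr]; linarith [h3, heq1, hineq2, hineq3]
    exact le_of_mul_le_mul_left hfin hP
  -- per-coordinate summed bound
  have hmain : ∀ i : Fin N, ∑ k ∈ Finset.Icc 1 n, ⟪g k i, x k i - xs i⟫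
      ≤ G * D ^ 2 / (2 * (1 - β₁ 1) * α n)
        + G ^ 2 / (2 * Real.sqrt ε * (1 - β₁ 1)) * ∑ k ∈ Finset.Icc 1 n, α k
        + G * D / (1 - β₁ 1) * ∑ k ∈ Finset.Icc 1 n, β₁ k := by
    intro i
    have hsum1 : ∑ k ∈ Finset.Icc 1 n, ⟪g k i, x k i - xs i⟫
        ≤ ∑ k ∈ Finset.Icc 1 n,
            (Real.sqrt (vhat k i) / (α k * (1 - β₁ k))
                * (‖x k i - xs i‖ ^ 2 - ‖x (k + 1) i - xs i‖ ^ 2) / 2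
              + α k * (G ^ 2 / (2 * Real.sqrt ε * (1 - β₁ 1)))
              + β₁ k * (G * D / (1 - β₁ 1))) :=
      Finset.sum_le_sum fun k hk => key i k (Finset.mem_Icc.mp hk).1
    have htel : ∑ k ∈ Finset.Icc 1 n,
          Real.sqrt (vhat k i) / (α k * (1 - β₁ k))
            * (‖x k i - xs i‖ ^ 2 - ‖x (k + 1) i - xs i‖ ^ 2)
        ≤ Real.sqrt (vhat n i) / (α n * (1 - β₁ n))
            * (D ^ 2 - ‖x (n + 1) i - xs i‖ ^ 2) :=
      stmt8_telescope (fun k => Real.sqrt (vhat k i) / (α k * (1 - β₁ k)))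
        (fun k => ‖x k i - xs i‖ ^ 2) (D ^ 2)
        (fun k hk => div_nonneg (Real.sqrt_nonneg _) (mul_pos (hα k hk) (hb k hk)).le)
        (fun k hk => div_le_div₀ (Real.sqrt_nonneg _) (Real.sqrt_le_sqrt (hvhat_mono k i))
          (mul_pos (hα (k + 1) (by omega)) (hb (k + 1) (by omega))) (hαβ k hk))
        (fun k _ => sq_nonneg _)
        (fun k hk => pow_le_pow_left₀ (norm_nonneg _) (hdist k hk i) 2)
        n hn
    have hcn : Real.sqrt (vhat n i) / (α n * (1 - β₁ n)) ≤ G / (α n * (1 - β₁ 1)) :=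
      div_le_div₀ hG (hs_ub n i) (mul_pos hαn h1β)
        (mul_le_mul_of_nonneg_left (by linarith [hβle1 n hn]) hαn.le)
    have hcn0 : 0 ≤ Real.sqrt (vhat n i) / (α n * (1 - β₁ n)) :=
      div_nonneg (Real.sqrt_nonneg _) (mul_pos hαn (hb n hn)).le
    have htel2 : (∑ k ∈ Finset.Icc 1 n,
          Real.sqrt (vhat k i) / (α k * (1 - β₁ k))
            * (‖x k i - xs i‖ ^ 2 - ‖x (k + 1) i - xs i‖ ^ 2)) / 2
        ≤ G * D ^ 2 / (2 * (1 - β₁ 1) * α n) := by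
      have h2 : Real.sqrt (vhat n i) / (α n * (1 - β₁ n)) * (D ^ 2 - ‖x (n + 1) i - xs i‖ ^ 2)
          ≤ Real.sqrt (vhat n i) / (α n * (1 - β₁ n)) * D ^ 2 := by
        nlinarith [sq_nonneg ‖x (n + 1) i - xs i‖, hcn0]
      have h3 : Real.sqrt (vhat n i) / (α n * (1 - β₁ n)) * D ^ 2
          ≤ G / (α n * (1 - β₁ 1)) * D ^ 2 :=
        mul_le_mul_of_nonneg_right hcn (sq_nonneg D)
      have h4 : G / (α n * (1 - β₁ 1)) * D ^ 2 / 2 = G * D ^ 2 / (2 * (1 - β₁ 1) * α n) := by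
        rw [div_mul_eq_mul_div, div_div]
        congr 1
        ring
      linarith
    have hsplit : ∑ k ∈ Finset.Icc 1 n,
          (Real.sqrt (vhat k i) / (α k * (1 - β₁ k))
              * (‖x k i - xs i‖ ^ 2 - ‖x (k + 1) i - xs i‖ ^ 2) / 2
            + α k * (G ^ 2 / (2 * Real.sqrt ε * (1 - β₁ 1)))
            + β₁ k * (G * D / (1 - β₁ 1)))
        = (∑ k ∈ Finset.Icc 1 n,
            Real.sqrt (vhat k i) / (α k * (1 - β₁ k))
              * (‖x k i - xs i‖ ^ 2 - ‖x (k + 1) i - xs i‖ ^ 2)) / 2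
          + G ^ 2 / (2 * Real.sqrt ε * (1 - β₁ 1)) * ∑ k ∈ Finset.Icc 1 n, α k
          + G * D / (1 - β₁ 1) * ∑ k ∈ Finset.Icc 1 n, β₁ k := by
      rw [Finset.sum_add_distrib, Finset.sum_add_distrib, ← Finset.sum_div,
        Finset.mul_sum, Finset.mul_sum]
      congr 1
      · congr 1
        exact Finset.sum_congr rfl fun k _ => by ring
      · exact Finset.sum_congr rfl fun k _ => by ring
    rw [hsplit] at hsum1
    linarith [hsum1, htel2]
  rw [Finset.sum_comm]
  calc ∑ i : Fin N, ∑ k ∈ Finset.Icc 1 n, ⟪g k i, x k i - xs i⟫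
      ≤ ∑ _i : Fin N, (G * D ^ 2 / (2 * (1 - β₁ 1) * α n)
          + G ^ 2 / (2 * Real.sqrt ε * (1 - β₁ 1)) * ∑ k ∈ Finset.Icc 1 n, α k
          + G * D / (1 - β₁ 1) * ∑ k ∈ Finset.Icc 1 n, β₁ k) :=
        Finset.sum_le_sum fun i _ => hmain i
    _ = (N : ℝ) * (G * D ^ 2 / (2 * (1 - β₁ 1) * α n)
          + G ^ 2 / (2 * Real.sqrt ε * (1 - β₁ 1)) * ∑ k ∈ Finset.Icc 1 n, α k
          + G * D / (1 - β₁ 1) * ∑ k ∈ Finset.Icc 1 n, β₁ k) := by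
        rw [Finset.sum_const, Finset.card_univ, Fintype.card_fin, nsmul_eq_mul]
    _ = (N : ℝ) * G * D ^ 2 / (2 * (1 - β₁ 1) * α n)
        + ((N : ℝ) * G ^ 2 / (2 * Real.sqrt ε * (1 - β₁ 1)))
            * ∑ k ∈ Finset.Icc 1 n, α k
        + ((N : ℝ) * G * D / (1 - β₁ 1)) * ∑ k ∈ Finset.Icc 1 n, β₁ k := by ring
end

section
/- Consider the AMSGrad-type iteration in the product of Hilbert spaces described in the context, with constant parameters α_k = α > 0 and β_{1k} = β ∈ [0,1) for all k. Then for every n ≥ 1 and every choice of points x*^i ∈ X_i (i = 1,…,N): (1/n) ∑_{k=1}^{n} ∑_{i=1}^{N} ⟨g_k^i, x_k^i − x*^i⟩ ≤ (N G D² / (2(1−β) α)) · (1/n) + (N G² / (2√ε (1−β))) α + (N G D / (1−β)) β. -/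
open scoped RealInnerProductSpace


private lemma stmt9_aux (N n : ℕ) (G D ε α β : ℝ) (hne1 : (1-β) ≠ 0)
    (hne2 : Real.sqrt ε ≠ 0) (hne3 : (n:ℝ) ≠ 0) (hαne : α ≠ 0) :
    (1/(n:ℝ)) * ((N:ℝ) * ((G * D^2/(2*α) + (n:ℝ) * (α*G^2/(2*Real.sqrt ε)) + (n:ℝ) * (β*G*D)) / (1-β)))
      = ((N : ℝ) * G * D ^ 2 / (2 * (1 - β) * α)) * (1 / (n : ℝ))
        + ((N : ℝ) * G ^ 2 / (2 * Real.sqrt ε * (1 - β))) * α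
        + ((N : ℝ) * G * D / (1 - β)) * β := by
  field_simp

/-- The deterministic core of the paper's Corollary 1 (constant learning rate) for the
AMSGrad-type iteration (Algorithm 1) specialized to a product of Hilbert spaces, with
constant parameters `α k = α > 0` and `β₁ k = β ∈ [0,1)`: the averaged linearized
suboptimality is at most `O(1/n)` plus terms proportional to `α` and `β`. -/
theorem stmt9 (N : ℕ) (hN : 1 ≤ N)
    (H : Fin N → Type*) [∀ i, NormedAddCommGroup (H i)] [∀ i, InnerProductSpace ℝ (H i)]
    [∀ i, CompleteSpace (H i)]
    (X : ∀ i, Set (H i)) (hXne : ∀ i, (X i).Nonempty) (hXcl : ∀ i, IsClosed (X i))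
    (hXcv : ∀ i, Convex ℝ (X i))
    (D : ℝ) (hD : 0 ≤ D) (hdiam : ∀ i, ∀ u ∈ X i, ∀ v ∈ X i, ‖u - v‖ ≤ D)
    (G : ℝ) (hG : 0 ≤ G) (ε : ℝ) (hε : 0 < ε) (hεG : ε ≤ G ^ 2)
    (β₂ : ℝ) (hβ₂ : β₂ ∈ Set.Ico (0 : ℝ) 1)
    (β : ℝ) (hβ : β ∈ Set.Ico (0 : ℝ) 1)
    (α : ℝ) (hα : 0 < α)
    (g : ℕ → ∀ i, H i) (hg : ∀ k, 1 ≤ k → ∀ i, ‖g k i‖ ≤ G)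
    (m : ℕ → ∀ i, H i) (hm0 : ∀ i, m 0 i = 0)
    (hm : ∀ k : ℕ, ∀ i, m (k + 1) i = β • m k i + (1 - β) • g (k + 1) i)
    (v : ℕ → Fin N → ℝ) (hv0 : ∀ i, v 0 i = 0)
    (hv : ∀ k : ℕ, ∀ i, v (k + 1) i = β₂ * v k i + (1 - β₂) * ‖g (k + 1) i‖ ^ 2)
    (vhat : ℕ → Fin N → ℝ) (hvhat0 : ∀ i, vhat 0 i = ε)
    (hvhat : ∀ k : ℕ, ∀ i, vhat (k + 1) i = max (vhat k i) (v (k + 1) i))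
    (x : ℕ → ∀ i, H i) (hx1 : ∀ i, x 1 i ∈ X i)
    (hxX : ∀ k, 1 ≤ k → ∀ i, x (k + 1) i ∈ X i)
    (hxproj : ∀ k, 1 ≤ k → ∀ i, ∀ z ∈ X i,
      ‖x (k + 1) i - (x k i - (α / Real.sqrt (vhat k i)) • m k i)‖
        ≤ ‖z - (x k i - (α / Real.sqrt (vhat k i)) • m k i)‖)
    (n : ℕ) (hn : 1 ≤ n) (xs : ∀ i, H i) (hxs : ∀ i, xs i ∈ X i) :
    (1 / (n : ℝ)) * ∑ k ∈ Finset.Icc 1 n, ∑ i : Fin N, ⟪g k i, x k i - xs i⟫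
      ≤ ((N : ℝ) * G * D ^ 2 / (2 * (1 - β) * α)) * (1 / (n : ℝ))
        + ((N : ℝ) * G ^ 2 / (2 * Real.sqrt ε * (1 - β))) * α
        + ((N : ℝ) * G * D / (1 - β)) * β := by
  obtain ⟨hβ0, hβ1⟩ := hβ
  obtain ⟨hβ₂0, hβ₂1⟩ := hβ₂
  have h1β : (0:ℝ) < 1 - β := by linarith
  have hαne : α ≠ 0 := ne_of_gt hα
  have hsε : 0 < Real.sqrt ε := Real.sqrt_pos.mpr hε
  have hnpos : (0:ℝ) < (n:ℝ) := by exact_mod_cast hn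
  -- membership of iterates
  have hx_mem : ∀ k, 1 ≤ k → ∀ i, x k i ∈ X i := by
    intro k hk i
    match k, hk with
    | 1, _ => exact hx1 i
    | (k+2), _ => exact hxX (k+1) (by omega) i
  -- per-coordinate bound
  have key : ∀ i : Fin N,
      ∑ k ∈ Finset.Icc 1 n, ⟪g k i, x k i - xs i⟫
        ≤ (G * D^2/(2*α) + (n:ℝ) * (α*G^2/(2*Real.sqrt ε)) + (n:ℝ) * (β*G*D)) / (1-β) := by
    intro i
    -- bound on m
    have hmG : ∀ k, ‖m k i‖ ≤ G := by
      intro k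
      induction k with
      | zero => simp [hm0, hG]
      | succ k ih =>
        rw [hm]
        calc ‖β • m k i + (1-β) • g (k+1) i‖
            ≤ ‖β • m k i‖ + ‖(1-β) • g (k+1) i‖ := norm_add_le _ _
          _ = β * ‖m k i‖ + (1-β) * ‖g (k+1) i‖ := by
              rw [norm_smul, norm_smul, Real.norm_of_nonneg hβ0,
                Real.norm_of_nonneg h1β.le]
          _ ≤ β * G + (1-β) * G := by
              have := hg (k+1) (by omega) i
              have h1 : β * ‖m k i‖ ≤ β * G := mul_le_mul_of_nonneg_left ih hβ0
              have h2 : (1-β) * ‖g (k+1) i‖ ≤ (1-β) * G :=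
                mul_le_mul_of_nonneg_left this h1β.le
              linarith
          _ = G := by ring
    -- bounds on v, vhat
    have hvG : ∀ k, v k i ≤ G^2 := by
      intro k
      induction k with
      | zero => rw [hv0]; positivity
      | succ k ih =>
        rw [hv]
        have hgk : ‖g (k+1) i‖^2 ≤ G^2 :=
          pow_le_pow_left₀ (norm_nonneg _) (hg (k+1) (by omega) i) 2
        nlinarith
    have hvhatε : ∀ k, ε ≤ vhat k i := by
      intro k
      induction k with
      | zero => rw [hvhat0]
      | succ k ih => rw [hvhat]; exact le_trans ih (le_max_left _ _)
    have hvhatG : ∀ k, vhat k i ≤ G^2 := by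
      intro k
      induction k with
      | zero => rw [hvhat0]; exact hεG
      | succ k ih => rw [hvhat]; exact max_le ih (hvG (k+1))
    set s : ℕ → ℝ := fun k => Real.sqrt (vhat k i) with hs
    have hspos : ∀ k, 0 < s k := fun k => Real.sqrt_pos.mpr (lt_of_lt_of_le hε (hvhatε k))
    have hsle : ∀ k, s k ≤ G := by
      intro k
      calc s k ≤ Real.sqrt (G^2) := Real.sqrt_le_sqrt (hvhatG k)
        _ = G := Real.sqrt_sq hG
    have hsge : ∀ k, Real.sqrt ε ≤ s k := fun k => Real.sqrt_le_sqrt (hvhatε k)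
    have hsmono : ∀ k, s k ≤ s (k+1) := by
      intro k
      apply Real.sqrt_le_sqrt
      rw [hvhat]
      exact le_max_left _ _
    set a : ℕ → ℝ := fun k => ‖x k i - xs i‖^2 with ha
    have hann : ∀ k, 0 ≤ a k := fun k => sq_nonneg _
    have hwD : ∀ k, 1 ≤ k → ‖x k i - xs i‖ ≤ D := fun k hk =>
      hdiam i (x k i) (hx_mem k hk i) (xs i) (hxs i)
    have haD : ∀ k, 1 ≤ k → a k ≤ D^2 := fun k hk =>
      pow_le_pow_left₀ (norm_nonneg _) (hwD k hk) 2
    -- projection step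
    have hstep : ∀ k, 1 ≤ k →
        2*(α/s k) * ⟪m k i, x k i - xs i⟫ ≤ a k - a (k+1) + (α/s k)^2 * ‖m k i‖^2 := by
      intro k hk
      set y : H i := x k i - (α / Real.sqrt (vhat k i)) • m k i with hy
      haveI : Nonempty (X i) := (hXne i).to_subtype
      have hinf : ‖y - x (k+1) i‖ = ⨅ w : X i, ‖y - w‖ := by
        apply le_antisymm
        · apply le_ciInf
          intro w
          have := hxproj k hk i w.1 w.2
          rwa [norm_sub_rev y, norm_sub_rev y]
        · have hb : BddBelow (Set.range fun w : X i => ‖y - w‖) := by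
            refine ⟨0, ?_⟩
            rintro _ ⟨w, rfl⟩
            exact norm_nonneg _
          exact ciInf_le hb ⟨x (k+1) i, hx_mem (k+1) (by omega) i⟩
      have hobt : ⟪y - x (k+1) i, xs i - x (k+1) i⟫ ≤ 0 :=
        (norm_eq_iInf_iff_real_inner_le_zero (hXcv i)
          (hx_mem (k+1) (by omega) i)).mp hinf (xs i) (hxs i)
      have h2 : ‖x (k+1) i - xs i‖^2 ≤ ‖y - xs i‖^2 := by
        have hdec : y - xs i = (y - x (k+1) i) + (x (k+1) i - xs i) := by abel
        have hexp := norm_add_sq_real (y - x (k+1) i) (x (k+1) i - xs i)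
        rw [← hdec] at hexp
        have hrw : ⟪y - x (k+1) i, x (k+1) i - xs i⟫
            = - ⟪y - x (k+1) i, xs i - x (k+1) i⟫ := by
          rw [← inner_neg_right, neg_sub]
        nlinarith [sq_nonneg ‖y - x (k+1) i‖]
      have h3 : ‖y - xs i‖^2
          = a k - 2*(α/s k) * ⟪m k i, x k i - xs i⟫ + (α/s k)^2 * ‖m k i‖^2 := by
        have hdec : y - xs i = (x k i - xs i) - (α/s k) • m k i := by
          rw [hy]; abel
        rw [hdec, norm_sub_sq_real, real_inner_smul_right, norm_smul,
          Real.norm_of_nonneg (by positivity : (0:ℝ) ≤ α / s k), mul_pow,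
          real_inner_comm]
        ring
      rw [h3] at h2
      have h4 : a (k+1) ≤ a k - 2*(α/s k) * ⟪m k i, x k i - xs i⟫ + (α/s k)^2 * ‖m k i‖^2 := h2
      linarith
    -- telescoping
    have tele : ∀ N', 1 ≤ N' →
        ∑ k ∈ Finset.Icc 1 N', s k * (a k - a (k+1)) + s N' * a (N'+1) ≤ s N' * D^2 := by
      intro N' hN'
      induction N', hN' using Nat.le_induction with
      | base =>
        simp only [Finset.Icc_self, Finset.sum_singleton]
        have h1 := haD 1 le_rfl
        nlinarith [hspos 1, hann 2]
      | succ N' hN' ih =>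
        rw [Finset.sum_Icc_succ_top (by omega : 1 ≤ N' + 1)]
        have hmix : (s (N'+1) - s N') * a (N'+1) ≤ (s (N'+1) - s N') * D^2 :=
          mul_le_mul_of_nonneg_left (haD (N'+1) (by omega)) (by linarith [hsmono N'])
        linarith
    -- per-step bound on inner m
    have mstep : ∀ k ∈ Finset.Icc 1 n,
        (1-β) * ⟪g k i, x k i - xs i⟫
          ≤ (s k * (a k - a (k+1)))/(2*α) + α*G^2/(2*Real.sqrt ε) + β*G*D := by
      intro k hk
      rw [Finset.mem_Icc] at hk
      obtain ⟨hk1, hkn⟩ := hk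
      have hsk := hspos k
      -- divide the step inequality
      have hIm : ⟪m k i, x k i - xs i⟫
          ≤ (s k * (a k - a (k+1)))/(2*α) + α/(2*s k) * ‖m k i‖^2 := by
        have h1 := hstep k hk1
        have h2 : ⟪m k i, x k i - xs i⟫
            ≤ (a k - a (k+1) + (α/s k)^2 * ‖m k i‖^2) / (2*(α/s k)) := by
          rw [le_div_iff₀ (by positivity)]
          linarith
        have h3 : (a k - a (k+1) + (α/s k)^2 * ‖m k i‖^2) / (2*(α/s k))
            = (s k * (a k - a (k+1)))/(2*α) + α/(2*s k) * ‖m k i‖^2 := by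
          field_simp
        rw [h3] at h2
        exact h2
      have hM : α/(2*s k) * ‖m k i‖^2 ≤ α*G^2/(2*Real.sqrt ε) := by
        have h1 : ‖m k i‖^2 ≤ G^2 := pow_le_pow_left₀ (norm_nonneg _) (hmG k) 2
        have h2 : α/(2*s k) ≤ α/(2*Real.sqrt ε) := by
          apply div_le_div_of_nonneg_left hα.le (by linarith [hsε])
          linarith [hsge k]
        calc α/(2*s k) * ‖m k i‖^2 ≤ α/(2*Real.sqrt ε) * G^2 :=
              mul_le_mul h2 h1 (sq_nonneg _) (by positivity)
          _ = α*G^2/(2*Real.sqrt ε) := by ring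
      -- decompose g via m
      obtain ⟨j, rfl⟩ : ∃ j, k = j + 1 := ⟨k - 1, by omega⟩
      have hdec : (1-β) * ⟪g (j+1) i, x (j+1) i - xs i⟫
          = ⟪m (j+1) i, x (j+1) i - xs i⟫ - β * ⟪m j i, x (j+1) i - xs i⟫ := by
        rw [hm j i, inner_add_left, real_inner_smul_left, real_inner_smul_left]
        ring
      have hCS : -(β * ⟪m j i, x (j+1) i - xs i⟫) ≤ β*G*D := by
        have h1 : |⟪m j i, x (j+1) i - xs i⟫| ≤ ‖m j i‖ * ‖x (j+1) i - xs i‖ :=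
          abs_real_inner_le_norm _ _
        have h2 : ‖m j i‖ * ‖x (j+1) i - xs i‖ ≤ G * D :=
          mul_le_mul (hmG j) (hwD (j+1) (by omega)) (norm_nonneg _) hG
        have h3 : -(G*D) ≤ ⟪m j i, x (j+1) i - xs i⟫ := by
          have := neg_abs_le ⟪m j i, x (j+1) i - xs i⟫
          linarith
        nlinarith
      rw [hdec]
      linarith [hIm]
    -- sum up
    have htele := tele n hn
    have hTsum : ∑ k ∈ Finset.Icc 1 n, s k * (a k - a (k+1)) ≤ G*D^2 := by
      have h1 : 0 ≤ s n * a (n+1) := mul_nonneg (hspos n).le (hann (n+1))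
      have h2 : s n * D^2 ≤ G*D^2 := mul_le_mul_of_nonneg_right (hsle n) (by positivity)
      linarith
    have hgb : (1-β) * ∑ k ∈ Finset.Icc 1 n, ⟪g k i, x k i - xs i⟫
        ≤ G*D^2/(2*α) + (n:ℝ) * (α*G^2/(2*Real.sqrt ε)) + (n:ℝ) * (β*G*D) := by
      rw [Finset.mul_sum]
      have step1 : ∑ k ∈ Finset.Icc 1 n, (1-β) * ⟪g k i, x k i - xs i⟫
          ≤ ∑ k ∈ Finset.Icc 1 n, ((s k * (a k - a (k+1)))/(2*α)
              + (α*G^2/(2*Real.sqrt ε) + β*G*D)) := by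
        apply Finset.sum_le_sum
        intro k hk
        have := mstep k hk
        linarith
      rw [Finset.sum_add_distrib, Finset.sum_const, Nat.card_Icc,
        ← Finset.sum_div] at step1
      have hc : ((n + 1 - 1 : ℕ)) • (α*G^2/(2*Real.sqrt ε) + β*G*D)
          = (n:ℝ) * (α*G^2/(2*Real.sqrt ε)) + (n:ℝ)*(β*G*D) := by
        simp only [Nat.add_sub_cancel, nsmul_eq_mul]
        ring
      rw [hc] at step1
      have hdiv : (∑ k ∈ Finset.Icc 1 n, s k * (a k - a (k+1)))/(2*α) ≤ G*D^2/(2*α) :=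
        (div_le_div_iff_of_pos_right (by positivity)).mpr hTsum
      linarith
    rw [le_div_iff₀ h1β]
    linarith [hgb]
  -- combine coordinates
  rw [Finset.sum_comm]
  have hbig : ∑ i : Fin N, ∑ k ∈ Finset.Icc 1 n, ⟪g k i, x k i - xs i⟫
      ≤ (N:ℝ) * ((G * D^2/(2*α) + (n:ℝ) * (α*G^2/(2*Real.sqrt ε)) + (n:ℝ) * (β*G*D)) / (1-β)) := by
    calc ∑ i : Fin N, ∑ k ∈ Finset.Icc 1 n, ⟪g k i, x k i - xs i⟫
        ≤ ∑ _i : Fin N, ((G * D^2/(2*α) + (n:ℝ) * (α*G^2/(2*Real.sqrt ε)) + (n:ℝ) * (β*G*D)) / (1-β)) :=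
          Finset.sum_le_sum (fun i _ => key i)
      _ = (N:ℝ) * _ := by rw [Finset.sum_const, Finset.card_univ, Fintype.card_fin,
            nsmul_eq_mul]
  have heq := stmt9_aux N n G D ε α β (ne_of_gt h1β) (ne_of_gt hsε) (ne_of_gt hnpos) hαne
  rw [← heq]
  apply mul_le_mul_of_nonneg_left hbig (by positivity)
end

section
/- Consider the AMSGrad-type iteration in the product of Hilbert spaces described in the context, with diminishing learning rates α_k = k^{−η} for some η ∈ [1/2, 1), and momentum parameters satisfying ∑_{k=1}^{∞} β_{1k} ≤ B < ∞. Then for every n ≥ 1 and every choice of points x*^i ∈ X_i (i = 1,…,N): (1/n) ∑_{k=1}^{n} ∑_{i=1}^{N} ⟨g_k^i, x_k^i − x*^i⟩ ≤ (N G D² / (2(1−β_{11}))) n^{η−1} + (N G² / (2√ε (1−β_{11})(1−η))) n^{−η} + (N G D B / (1−β_{11})) (1/n). In particular, the left-hand side is O(n^{η−1}). -/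
open scoped RealInnerProductSpace

/-- Squared-distance nonexpansiveness of nearest-point projection onto a convex set. -/
lemma amsgrad_proj_sq_le {F : Type*} [NormedAddCommGroup F] [InnerProductSpace ℝ F]
    {K : Set F} (hK : Convex ℝ K) {y p q : F} (hp : p ∈ K) (hq : q ∈ K)
    (hmin : ∀ z ∈ K, ‖p - y‖ ≤ ‖z - y‖) : ‖p - q‖ ^ 2 ≤ ‖y - q‖ ^ 2 := by
  have hinf : ‖y - p‖ = ⨅ w : K, ‖y - w‖ := by
    haveI : Nonempty K := ⟨⟨p, hp⟩⟩
    apply le_antisymm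
    · refine le_ciInf fun w => ?_
      rw [norm_sub_rev y p, norm_sub_rev y (w : F)]
      exact hmin w w.2
    · exact ciInf_le (f := fun w : K => ‖y - (w : F)‖) ⟨0, by rintro r ⟨w, rfl⟩; positivity⟩ ⟨p, hp⟩
  have hobt : ⟪y - p, q - p⟫ ≤ 0 :=
    (norm_eq_iInf_iff_real_inner_le_zero hK hp).mp hinf q hq
  have hexp : ‖y - q‖ ^ 2 = ‖y - p‖ ^ 2 - 2 * ⟪y - p, q - p⟫ + ‖q - p‖ ^ 2 := by
    rw [show y - q = (y - p) - (q - p) by abel]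
    exact norm_sub_sq_real _ _
  rw [norm_sub_rev p q]
  nlinarith [sq_nonneg ‖y - p‖]

/-- Abel summation bound for a telescoping sum with nondecreasing weights. -/
lemma amsgrad_abel {a d : ℕ → ℝ} {D2 : ℝ}
    (ha0 : ∀ k, 1 ≤ k → 0 ≤ a k) (hamono : ∀ k, 1 ≤ k → a k ≤ a (k + 1))
    (hd0 : ∀ k, 1 ≤ k → 0 ≤ d k) (hdD : ∀ k, 1 ≤ k → d k ≤ D2) :
    ∀ n, 1 ≤ n → ∑ k ∈ Finset.Icc 1 n, a k * (d k - d (k + 1)) ≤ a n * D2 - a n * d (n + 1) := by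
  intro n hn
  induction n with
  | zero => omega
  | succ n ih =>
    rcases Nat.eq_or_lt_of_le hn with h1 | h2
    · have : n = 0 := by omega
      subst this
      simp only [Finset.Icc_self, Finset.sum_singleton]
      nlinarith [ha0 1 le_rfl, hd0 1 le_rfl, hdD 1 le_rfl, hd0 2 (by omega)]
    · have hn' : 1 ≤ n := by omega
      rw [Finset.sum_Icc_succ_top (by omega)]
      have h3 := ih hn'
      nlinarith [mul_nonneg (sub_nonneg.2 (hamono n hn')) (sub_nonneg.2 (hdD (n + 1) (by omega))),
        mul_nonneg (sub_nonneg.2 (hamono n hn')) (hd0 (n + 1) (by omega))]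

/-- Bound on the partial sums of `k^{-η}` for `η ∈ (0,1)`. -/
lemma amsgrad_rpow_sum {η : ℝ} (h0 : 0 < η) (h1 : η < 1) :
    ∀ n : ℕ, ∑ k ∈ Finset.Icc 1 n, (k : ℝ) ^ (-η) ≤ (n : ℝ) ^ (1 - η) / (1 - η) := by
  have hc : (0 : ℝ) < 1 - η := by linarith
  intro n
  induction n with
  | zero => simp [Real.zero_rpow (by linarith : (1 : ℝ) - η ≠ 0)]
  | succ n ih =>
    rw [Finset.sum_Icc_succ_top (by omega)]
    have hb : (0 : ℝ) < (n : ℝ) + 1 := by positivity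
    have hbp : (0 : ℝ) < ((n : ℝ) + 1) ^ (1 - η) := Real.rpow_pos_of_pos hb _
    have hsub : ((n : ℝ) + 1) ^ (1 - η) / ((n : ℝ) + 1) = ((n : ℝ) + 1) ^ (-η) := by
      have h5 := Real.rpow_sub hb (1 - η) 1
      rw [Real.rpow_one] at h5
      rw [← h5]
      congr 1
      ring
    have e1 : ((n : ℝ) / ((n : ℝ) + 1)) ^ (1 - η) ≤ 1 + (1 - η) * ((n : ℝ) / ((n : ℝ) + 1) - 1) := by
      have := rpow_one_add_le_one_add_mul_self
        (s := (n : ℝ) / ((n : ℝ) + 1) - 1) (by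
          have : (0:ℝ) ≤ (n : ℝ) / ((n : ℝ) + 1) := by positivity
          linarith) (le_of_lt hc) (by linarith)
      rwa [show 1 + ((n : ℝ) / ((n : ℝ) + 1) - 1) = (n : ℝ) / ((n : ℝ) + 1) by ring] at this
    have hd : ((n : ℝ) / ((n : ℝ) + 1)) ^ (1 - η) = (n : ℝ) ^ (1 - η) / ((n : ℝ) + 1) ^ (1 - η) :=
      Real.div_rpow (Nat.cast_nonneg n) (le_of_lt hb) _
    have e2 : (n : ℝ) ^ (1 - η) ≤ ((n : ℝ) + 1) ^ (1 - η) * (1 + (1 - η) * ((n : ℝ) / ((n : ℝ) + 1) - 1)) := by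
      have := mul_le_mul_of_nonneg_right e1 hbp.le
      rw [hd, div_mul_cancel₀ _ (ne_of_gt hbp)] at this
      linarith [this]
    have e3 : ((n : ℝ) + 1) ^ (1 - η) * (1 + (1 - η) * ((n : ℝ) / ((n : ℝ) + 1) - 1))
        = ((n : ℝ) + 1) ^ (1 - η) - (1 - η) * (((n : ℝ) + 1) ^ (1 - η) / ((n : ℝ) + 1)) := by
      field_simp
      ring
    have key : (1 - η) * (((n : ℝ) + 1)) ^ (-η) ≤ ((n : ℝ) + 1) ^ (1 - η) - (n : ℝ) ^ (1 - η) := by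
      rw [← hsub]; nlinarith [e2, e3]
    have h4 : (n : ℝ) ^ (1 - η) / (1 - η) + ((n : ℝ) + 1) ^ (-η) ≤ ((n : ℝ) + 1) ^ (1 - η) / (1 - η) := by
      rw [div_add' _ _ _ (ne_of_gt hc), div_le_div_iff₀ hc hc]
      nlinarith [key]
    push_cast
    linarith [ih, h4]
set_option maxHeartbeats 2000000 in
/-- The deterministic core of the paper's Corollary 2 (diminishing learning rate) for the
AMSGrad-type iteration (Algorithm 1) specialized to a product of Hilbert spaces, with
`α k = k ^ (-η)` for `η ∈ [1/2, 1)` and summable momentum parameters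
(`∑ β₁ k ≤ B`): the averaged linearized suboptimality is `O(n^{η-1})`. -/
theorem stmt10 (N : ℕ) (hN : 1 ≤ N)
    (H : Fin N → Type*) [∀ i, NormedAddCommGroup (H i)] [∀ i, InnerProductSpace ℝ (H i)]
    [∀ i, CompleteSpace (H i)]
    (X : ∀ i, Set (H i)) (hXne : ∀ i, (X i).Nonempty) (hXcl : ∀ i, IsClosed (X i))
    (hXcv : ∀ i, Convex ℝ (X i))
    (D : ℝ) (hD : 0 ≤ D) (hdiam : ∀ i, ∀ u ∈ X i, ∀ v ∈ X i, ‖u - v‖ ≤ D)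
    (G : ℝ) (hG : 0 ≤ G) (ε : ℝ) (hε : 0 < ε) (hεG : ε ≤ G ^ 2)
    (β₂ : ℝ) (hβ₂ : β₂ ∈ Set.Ico (0 : ℝ) 1)
    (β₁ : ℕ → ℝ) (hβ₁ : ∀ k, 1 ≤ k → β₁ k ∈ Set.Ico (0 : ℝ) 1)
    (hβ₁mono : ∀ k, 1 ≤ k → β₁ (k + 1) ≤ β₁ k)
    (B : ℝ) (hB : ∀ n : ℕ, ∑ k ∈ Finset.Icc 1 n, β₁ k ≤ B)
    (η : ℝ) (hη : η ∈ Set.Ico (1 / 2 : ℝ) 1)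
    (α : ℕ → ℝ) (hαdef : ∀ k, 1 ≤ k → α k = (k : ℝ) ^ (-η))
    (hαβ : ∀ k, 1 ≤ k → α (k + 1) * (1 - β₁ (k + 1)) ≤ α k * (1 - β₁ k))
    (g : ℕ → ∀ i, H i) (hg : ∀ k, 1 ≤ k → ∀ i, ‖g k i‖ ≤ G)
    (m : ℕ → ∀ i, H i) (hm0 : ∀ i, m 0 i = 0)
    (hm : ∀ k : ℕ, ∀ i, m (k + 1) i = β₁ (k + 1) • m k i + (1 - β₁ (k + 1)) • g (k + 1) i)
    (v : ℕ → Fin N → ℝ) (hv0 : ∀ i, v 0 i = 0)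
    (hv : ∀ k : ℕ, ∀ i, v (k + 1) i = β₂ * v k i + (1 - β₂) * ‖g (k + 1) i‖ ^ 2)
    (vhat : ℕ → Fin N → ℝ) (hvhat0 : ∀ i, vhat 0 i = ε)
    (hvhat : ∀ k : ℕ, ∀ i, vhat (k + 1) i = max (vhat k i) (v (k + 1) i))
    (x : ℕ → ∀ i, H i) (hx1 : ∀ i, x 1 i ∈ X i)
    (hxX : ∀ k, 1 ≤ k → ∀ i, x (k + 1) i ∈ X i)
    (hxproj : ∀ k, 1 ≤ k → ∀ i, ∀ z ∈ X i,
      ‖x (k + 1) i - (x k i - (α k / Real.sqrt (vhat k i)) • m k i)‖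
        ≤ ‖z - (x k i - (α k / Real.sqrt (vhat k i)) • m k i)‖)
    (n : ℕ) (hn : 1 ≤ n) (xs : ∀ i, H i) (hxs : ∀ i, xs i ∈ X i) :
    (1 / (n : ℝ)) * ∑ k ∈ Finset.Icc 1 n, ∑ i : Fin N, ⟪g k i, x k i - xs i⟫
      ≤ ((N : ℝ) * G * D ^ 2 / (2 * (1 - β₁ 1))) * (n : ℝ) ^ (η - 1)
        + ((N : ℝ) * G ^ 2 / (2 * Real.sqrt ε * (1 - β₁ 1) * (1 - η))) * (n : ℝ) ^ (-η)
        + ((N : ℝ) * G * D * B / (1 - β₁ 1)) * (1 / (n : ℝ)) := by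
  classical
  obtain ⟨hβ₂0, hβ₂1⟩ := hβ₂
  obtain ⟨hη2, hη1⟩ := hη
  have hη0 : (0 : ℝ) < η := by linarith
  have hb1 : 0 < 1 - β₁ 1 := by linarith [(hβ₁ 1 le_rfl).2]
  have hGpos : 0 < G := by nlinarith
  have hεs : 0 < Real.sqrt ε := Real.sqrt_pos.mpr hε
  have hβ₁le : ∀ k, 1 ≤ k → β₁ k ≤ β₁ 1 := by
    intro k hk
    induction k with
    | zero => omega
    | succ k ih =>
      rcases Nat.eq_zero_or_pos k with rfl | hk'
      · exact le_rfl
      · exact le_trans (hβ₁mono k hk') (ih hk')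
  have hbk : ∀ k, 1 ≤ k → 0 < 1 - β₁ k := fun k hk => by linarith [(hβ₁ k hk).2]
  have hbk' : ∀ k, 1 ≤ k → 1 - β₁ 1 ≤ 1 - β₁ k := fun k hk => by linarith [hβ₁le k hk]
  have hβ₁0 : ∀ k, 1 ≤ k → 0 ≤ β₁ k := fun k hk => (hβ₁ k hk).1
  have hα_pos : ∀ k, 1 ≤ k → 0 < α k := by
    intro k hk
    rw [hαdef k hk]
    exact Real.rpow_pos_of_pos (by exact_mod_cast Nat.lt_of_lt_of_le Nat.zero_lt_one hk) _
  have hm_bound : ∀ i k, ‖m k i‖ ≤ G := by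
    intro i k
    induction k with
    | zero => rw [hm0]; simpa using hGpos.le
    | succ k ih =>
      have h1 := hβ₁ (k + 1) (by omega)
      have h2 := hg (k + 1) (by omega) i
      calc ‖m (k + 1) i‖ = ‖β₁ (k + 1) • m k i + (1 - β₁ (k + 1)) • g (k + 1) i‖ := by rw [hm]
        _ ≤ ‖β₁ (k + 1) • m k i‖ + ‖(1 - β₁ (k + 1)) • g (k + 1) i‖ := norm_add_le _ _
        _ = β₁ (k + 1) * ‖m k i‖ + (1 - β₁ (k + 1)) * ‖g (k + 1) i‖ := by
            rw [norm_smul, norm_smul, Real.norm_eq_abs, Real.norm_eq_abs,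
              abs_of_nonneg h1.1, abs_of_nonneg (by linarith [h1.2])]
        _ ≤ G := by nlinarith [norm_nonneg (m k i), norm_nonneg (g (k + 1) i), h1.1, h1.2]
  have hv_bound : ∀ i k, 0 ≤ v k i ∧ v k i ≤ G ^ 2 := by
    intro i k
    induction k with
    | zero => rw [hv0]; exact ⟨le_rfl, by positivity⟩
    | succ k ih =>
      rw [hv]
      have h2 := hg (k + 1) (by omega) i
      have h3 : ‖g (k + 1) i‖ ^ 2 ≤ G ^ 2 := by nlinarith [norm_nonneg (g (k + 1) i)]
      refine ⟨?_, ?_⟩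
      · have h4 := mul_nonneg hβ₂0 ih.1
        nlinarith [sq_nonneg ‖g (k + 1) i‖]
      · nlinarith [ih.1, ih.2]
  have hvhat_lb : ∀ i k, ε ≤ vhat k i := by
    intro i k
    induction k with
    | zero => rw [hvhat0]
    | succ k ih => rw [hvhat]; exact le_trans ih (le_max_left _ _)
  have hvhat_ub : ∀ i k, vhat k i ≤ G ^ 2 := by
    intro i k
    induction k with
    | zero => rw [hvhat0]; exact hεG
    | succ k ih => rw [hvhat]; exact max_le ih (hv_bound i (k + 1)).2
  have hvhat_pos : ∀ i k, 0 < vhat k i := fun i k => lt_of_lt_of_le hε (hvhat_lb i k)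
  have hsq_pos : ∀ i k, 0 < Real.sqrt (vhat k i) := fun i k => Real.sqrt_pos.mpr (hvhat_pos i k)
  have hsq_lb : ∀ i k, Real.sqrt ε ≤ Real.sqrt (vhat k i) :=
    fun i k => Real.sqrt_le_sqrt (hvhat_lb i k)
  have hsq_ub : ∀ i k, Real.sqrt (vhat k i) ≤ G := fun i k => by
    rw [show G = Real.sqrt (G ^ 2) from (Real.sqrt_sq hG).symm]
    exact Real.sqrt_le_sqrt (hvhat_ub i k)
  have hxk : ∀ i k, 1 ≤ k → x k i ∈ X i := by
    intro i k hk
    obtain ⟨j, rfl⟩ : ∃ j, k = j + 1 := ⟨k - 1, by omega⟩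
    rcases Nat.eq_zero_or_pos j with rfl | hj
    · exact hx1 i
    · exact hxX j hj i
  have hnpos : (0 : ℝ) < n := by exact_mod_cast hn
  have main_i : ∀ i, ∑ k ∈ Finset.Icc 1 n, ⟪g k i, x k i - xs i⟫
      ≤ G * (n : ℝ) ^ η * D ^ 2 / (2 * (1 - β₁ 1))
        + G ^ 2 / (2 * Real.sqrt ε * (1 - β₁ 1)) * ((n : ℝ) ^ (1 - η) / (1 - η))
        + G * D / (1 - β₁ 1) * B := by
    intro i
    set d : ℕ → ℝ := fun k => ‖x k i - xs i‖ ^ 2 with hdd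
    set a : ℕ → ℝ := fun k => Real.sqrt (vhat k i) / (2 * (α k * (1 - β₁ k))) with haa
    have hdD : ∀ k, 1 ≤ k → d k ≤ D ^ 2 := by
      intro k hk
      have h1 := hdiam i (x k i) (hxk i k hk) (xs i) (hxs i)
      simp only [hdd]
      nlinarith [norm_nonneg (x k i - xs i)]
    have hd0 : ∀ k, 1 ≤ k → 0 ≤ d k := by
      intro k hk; simp only [hdd]; positivity
    have ha0 : ∀ k, 1 ≤ k → 0 ≤ a k := by
      intro k hk
      have h1 := hα_pos k hk; have h2 := hbk k hk; have h3 := hsq_pos i k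
      simp only [haa]; positivity
    have hamono : ∀ k, 1 ≤ k → a k ≤ a (k + 1) := by
      intro k hk
      simp only [haa]
      have h1 : Real.sqrt (vhat k i) ≤ Real.sqrt (vhat (k + 1) i) :=
        Real.sqrt_le_sqrt (by rw [hvhat]; exact le_max_left _ _)
      have h2 := hαβ k hk
      have h3 := mul_pos (hα_pos (k + 1) (by omega)) (hbk (k + 1) (by omega))
      exact div_le_div₀ (hsq_pos i (k + 1)).le h1 (by linarith) (by linarith)
    have step : ∀ k ∈ Finset.Icc 1 n, ⟪g k i, x k i - xs i⟫
        ≤ a k * (d k - d (k + 1))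
          + G ^ 2 / (2 * Real.sqrt ε * (1 - β₁ 1)) * (k : ℝ) ^ (-η)
          + G * D / (1 - β₁ 1) * β₁ k := by
      intro k hk
      rw [Finset.mem_Icc] at hk
      have hk1 : 1 ≤ k := hk.1
      set c := α k / Real.sqrt (vhat k i) with hcc
      have hc_pos : 0 < c := div_pos (hα_pos k hk1) (hsq_pos i k)
      have hproj : ‖x (k + 1) i - xs i‖ ^ 2 ≤ ‖(x k i - c • m k i) - xs i‖ ^ 2 :=
        amsgrad_proj_sq_le (hXcv i) (hxk i (k + 1) (by omega)) (hxs i)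
          (fun z hz => hxproj k hk1 i z hz)
      have hexp : ‖(x k i - c • m k i) - xs i‖ ^ 2
          = ‖x k i - xs i‖ ^ 2 - 2 * c * ⟪m k i, x k i - xs i⟫ + c ^ 2 * ‖m k i‖ ^ 2 := by
        rw [show (x k i - c • m k i) - xs i = (x k i - xs i) - c • m k i by abel]
        rw [norm_sub_sq_real, real_inner_smul_right, real_inner_comm, norm_smul,
          Real.norm_eq_abs, mul_pow, sq_abs]
        ring
      have hinner : 2 * c * ⟪m k i, x k i - xs i⟫ ≤ d k - d (k + 1) + c ^ 2 * ‖m k i‖ ^ 2 := by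
        simp only [hdd]
        linarith [hproj, hexp]
      have key1 : ⟪m k i, x k i - xs i⟫ ≤ (d k - d (k + 1)) / (2 * c) + c / 2 * ‖m k i‖ ^ 2 := by
        rw [← sub_le_iff_le_add, le_div_iff₀ (by positivity : (0 : ℝ) < 2 * c)]
        nlinarith [hinner]
      have key2 : ⟪g k i, x k i - xs i⟫
          ≤ ((d k - d (k + 1)) / (2 * c) + c / 2 * ‖m k i‖ ^ 2 + β₁ k * (G * D)) / (1 - β₁ k) := by
        rw [le_div_iff₀ (hbk k hk1)]
        have hmk : m k i = β₁ k • m (k - 1) i + (1 - β₁ k) • g k i := by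
          obtain ⟨j, hj⟩ : ∃ j, k = j + 1 := ⟨k - 1, by omega⟩
          subst hj; simpa using hm j i
        have hginner : (1 - β₁ k) * ⟪g k i, x k i - xs i⟫
            = ⟪m k i, x k i - xs i⟫ - β₁ k * ⟪m (k - 1) i, x k i - xs i⟫ := by
          rw [hmk, inner_add_left, real_inner_smul_left, real_inner_smul_left]
          ring
        have h5 : -⟪m (k - 1) i, x k i - xs i⟫ ≤ G * D := by
          have h1 := abs_real_inner_le_norm (m (k - 1) i) (x k i - xs i)
          have h2 := hm_bound i (k - 1)
          have h3 := hdiam i (x k i) (hxk i k hk1) (xs i) (hxs i)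
          nlinarith [neg_abs_le ⟪m (k - 1) i, x k i - xs i⟫,
            mul_le_mul h2 h3 (norm_nonneg _) hG]
        have h6 := mul_le_mul_of_nonneg_left h5 (hβ₁0 k hk1)
        nlinarith [key1, hginner, h6]
      have h7 : (α k) ≠ 0 := (hα_pos k hk1).ne'
      have h8 : Real.sqrt (vhat k i) ≠ 0 := (hsq_pos i k).ne'
      have h9 : (1 - β₁ k) ≠ 0 := (hbk k hk1).ne'
      have e4 : ((d k - d (k + 1)) / (2 * c)) / (1 - β₁ k) = a k * (d k - d (k + 1)) := by
        simp only [haa, hcc]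
        field_simp
      have hkpos : (0 : ℝ) < (k : ℝ) ^ (-η) :=
        Real.rpow_pos_of_pos (by exact_mod_cast Nat.lt_of_lt_of_le Nat.zero_lt_one hk1) _
      have e5 : (c / 2 * ‖m k i‖ ^ 2) / (1 - β₁ k)
          ≤ G ^ 2 / (2 * Real.sqrt ε * (1 - β₁ 1)) * (k : ℝ) ^ (-η) := by
        have e5a : (c / 2 * ‖m k i‖ ^ 2) / (1 - β₁ k)
            = (k : ℝ) ^ (-η) * ‖m k i‖ ^ 2 / (2 * Real.sqrt (vhat k i) * (1 - β₁ k)) := by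
          simp only [hcc]
          rw [hαdef k hk1]
          have hsqp := hsq_pos i k
          have hbkp := hbk k hk1
          rw [div_div, div_mul_eq_mul_div, div_div,
            div_eq_div_iff (by positivity : Real.sqrt (vhat k i) * 2 * (1 - β₁ k) ≠ 0)
              (by positivity : 2 * Real.sqrt (vhat k i) * (1 - β₁ k) ≠ 0)]
          ring
        rw [e5a, show G ^ 2 / (2 * Real.sqrt ε * (1 - β₁ 1)) * (k : ℝ) ^ (-η)
            = (k : ℝ) ^ (-η) * G ^ 2 / (2 * Real.sqrt ε * (1 - β₁ 1)) by ring]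
        refine div_le_div₀ (by positivity) ?_ (mul_pos (mul_pos two_pos hεs) hb1) ?_
        · exact mul_le_mul_of_nonneg_left
            (by nlinarith [hm_bound i k, norm_nonneg (m k i)]) hkpos.le
        · nlinarith [mul_le_mul (hsq_lb i k) (hbk' k hk1) hb1.le (hsq_pos i k).le]
      have e7 : (β₁ k * (G * D)) / (1 - β₁ k) ≤ G * D / (1 - β₁ 1) * β₁ k := by
        have h10 : (β₁ k * (G * D)) / (1 - β₁ k) ≤ (β₁ k * (G * D)) / (1 - β₁ 1) :=
          div_le_div₀ (mul_nonneg (hβ₁0 k hk1) (by positivity)) le_rfl hb1 (hbk' k hk1)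
        calc (β₁ k * (G * D)) / (1 - β₁ k) ≤ (β₁ k * (G * D)) / (1 - β₁ 1) := h10
          _ = G * D / (1 - β₁ 1) * β₁ k := by ring
      calc ⟪g k i, x k i - xs i⟫
          ≤ ((d k - d (k + 1)) / (2 * c) + c / 2 * ‖m k i‖ ^ 2 + β₁ k * (G * D)) / (1 - β₁ k) :=
            key2
        _ = ((d k - d (k + 1)) / (2 * c)) / (1 - β₁ k) + (c / 2 * ‖m k i‖ ^ 2) / (1 - β₁ k)
            + (β₁ k * (G * D)) / (1 - β₁ k) := by rw [add_div, add_div]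
        _ ≤ a k * (d k - d (k + 1))
              + G ^ 2 / (2 * Real.sqrt ε * (1 - β₁ 1)) * (k : ℝ) ^ (-η)
              + G * D / (1 - β₁ 1) * β₁ k :=
            add_le_add (add_le_add (le_of_eq e4) e5) e7
    have habel := amsgrad_abel ha0 hamono hd0 hdD n hn
    have hsum := Finset.sum_le_sum step
    have hnη : (0 : ℝ) < (n : ℝ) ^ (-η) := Real.rpow_pos_of_pos hnpos _
    have hnηp : (0 : ℝ) < (n : ℝ) ^ η := Real.rpow_pos_of_pos hnpos _
    have han : a n * D ^ 2 ≤ G * (n : ℝ) ^ η * D ^ 2 / (2 * (1 - β₁ 1)) := by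
      have hrw : G * (n : ℝ) ^ η / (2 * (1 - β₁ 1)) = G / (2 * ((n : ℝ) ^ (-η) * (1 - β₁ 1))) := by
        rw [Real.rpow_neg (Nat.cast_nonneg n)]
        have h11 : ((n : ℝ) ^ η) ≠ 0 := hnηp.ne'
        field_simp
      have h1 : a n ≤ G / (2 * ((n : ℝ) ^ (-η) * (1 - β₁ 1))) := by
        simp only [haa]
        rw [hαdef n hn]
        refine div_le_div₀ hG (hsq_ub i n) (mul_pos two_pos (mul_pos hnη hb1)) ?_
        nlinarith [mul_le_mul_of_nonneg_left (hbk' n hn) hnη.le]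
      calc a n * D ^ 2 ≤ (G / (2 * ((n : ℝ) ^ (-η) * (1 - β₁ 1)))) * D ^ 2 :=
            mul_le_mul_of_nonneg_right h1 (by positivity)
        _ = G * (n : ℝ) ^ η * D ^ 2 / (2 * (1 - β₁ 1)) := by rw [← hrw]; ring
    have hS1 : ∑ k ∈ Finset.Icc 1 n, a k * (d k - d (k + 1))
        ≤ G * (n : ℝ) ^ η * D ^ 2 / (2 * (1 - β₁ 1)) := by
      have h2 := mul_nonneg (ha0 n hn) (hd0 (n + 1) (by omega))
      linarith [habel, han]
    have hS2 : ∑ k ∈ Finset.Icc 1 n, G ^ 2 / (2 * Real.sqrt ε * (1 - β₁ 1)) * (k : ℝ) ^ (-η)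
        ≤ G ^ 2 / (2 * Real.sqrt ε * (1 - β₁ 1)) * ((n : ℝ) ^ (1 - η) / (1 - η)) := by
      rw [← Finset.mul_sum]
      exact mul_le_mul_of_nonneg_left (amsgrad_rpow_sum hη0 hη1 n)
        (div_nonneg (sq_nonneg G) (mul_pos (mul_pos two_pos hεs) hb1).le)
    have hS3 : ∑ k ∈ Finset.Icc 1 n, G * D / (1 - β₁ 1) * β₁ k ≤ G * D / (1 - β₁ 1) * B := by
      rw [← Finset.mul_sum]
      exact mul_le_mul_of_nonneg_left (hB n) (div_nonneg (by positivity) hb1.le)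
    calc ∑ k ∈ Finset.Icc 1 n, ⟪g k i, x k i - xs i⟫
        ≤ ∑ k ∈ Finset.Icc 1 n, (a k * (d k - d (k + 1))
            + G ^ 2 / (2 * Real.sqrt ε * (1 - β₁ 1)) * (k : ℝ) ^ (-η)
            + G * D / (1 - β₁ 1) * β₁ k) := hsum
      _ = (∑ k ∈ Finset.Icc 1 n, a k * (d k - d (k + 1)))
            + (∑ k ∈ Finset.Icc 1 n, G ^ 2 / (2 * Real.sqrt ε * (1 - β₁ 1)) * (k : ℝ) ^ (-η))
            + (∑ k ∈ Finset.Icc 1 n, G * D / (1 - β₁ 1) * β₁ k) := by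
          rw [Finset.sum_add_distrib, Finset.sum_add_distrib]
      _ ≤ _ := add_le_add (add_le_add hS1 hS2) hS3
  have htot : ∑ i : Fin N, ∑ k ∈ Finset.Icc 1 n, ⟪g k i, x k i - xs i⟫
      ≤ (N : ℝ) * (G * (n : ℝ) ^ η * D ^ 2 / (2 * (1 - β₁ 1))
        + G ^ 2 / (2 * Real.sqrt ε * (1 - β₁ 1)) * ((n : ℝ) ^ (1 - η) / (1 - η))
        + G * D / (1 - β₁ 1) * B) := by
    calc ∑ i : Fin N, ∑ k ∈ Finset.Icc 1 n, ⟪g k i, x k i - xs i⟫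
        ≤ ∑ _i : Fin N, (G * (n : ℝ) ^ η * D ^ 2 / (2 * (1 - β₁ 1))
            + G ^ 2 / (2 * Real.sqrt ε * (1 - β₁ 1)) * ((n : ℝ) ^ (1 - η) / (1 - η))
            + G * D / (1 - β₁ 1) * B) := Finset.sum_le_sum (fun i _ => main_i i)
      _ = _ := by
          rw [Finset.sum_const, Finset.card_univ, Fintype.card_fin, nsmul_eq_mul]
  have hswap : ∑ k ∈ Finset.Icc 1 n, ∑ i : Fin N, ⟪g k i, x k i - xs i⟫
      = ∑ i : Fin N, ∑ k ∈ Finset.Icc 1 n, ⟪g k i, x k i - xs i⟫ := Finset.sum_comm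
  have eη1 : (n : ℝ) ^ (η - 1) = (n : ℝ) ^ η / (n : ℝ) := by
    have h := Real.rpow_sub hnpos η 1
    rwa [Real.rpow_one] at h
  have eη2 : (n : ℝ) ^ (-η) = (n : ℝ) ^ (1 - η) / (n : ℝ) := by
    have h := Real.rpow_sub hnpos (1 - η) 1
    rw [Real.rpow_one] at h
    rw [show -η = 1 - η - 1 by ring, h]
  calc (1 / (n : ℝ)) * ∑ k ∈ Finset.Icc 1 n, ∑ i : Fin N, ⟪g k i, x k i - xs i⟫
      = (1 / (n : ℝ)) * ∑ i : Fin N, ∑ k ∈ Finset.Icc 1 n, ⟪g k i, x k i - xs i⟫ := by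
        rw [hswap]
    _ ≤ (1 / (n : ℝ)) * ((N : ℝ) * (G * (n : ℝ) ^ η * D ^ 2 / (2 * (1 - β₁ 1))
          + G ^ 2 / (2 * Real.sqrt ε * (1 - β₁ 1)) * ((n : ℝ) ^ (1 - η) / (1 - η))
          + G * D / (1 - β₁ 1) * B)) := by
        exact mul_le_mul_of_nonneg_left htot (by positivity)
    _ = ((N : ℝ) * G * D ^ 2 / (2 * (1 - β₁ 1))) * (n : ℝ) ^ (η - 1)
        + ((N : ℝ) * G ^ 2 / (2 * Real.sqrt ε * (1 - β₁ 1) * (1 - η))) * (n : ℝ) ^ (-η)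
        + ((N : ℝ) * G * D * B / (1 - β₁ 1)) * (1 / (n : ℝ)) := by
        rw [eη1, eη2]
        have h1 : (n : ℝ) ≠ 0 := hnpos.ne'
        have h2 : (1 - β₁ 1) ≠ 0 := hb1.ne'
        have h3 : Real.sqrt ε ≠ 0 := hεs.ne'
        have h4 : (1 : ℝ) - η ≠ 0 := by linarith
        field_simp
end

section
/- Consider the AMSGrad-type iteration in the product of Hilbert spaces described in the context, with N = 1, and suppose in addition that (f_k)_{k≥1} are convex functions on H_1 such that for each k, f_k has gradient g_k^1 at x_k^1 (i.e., f_k is differentiable at x_k^1 with ⟨g_k^1, h⟩ as its derivative in direction h). Then for every n ≥ 1 with α_n > 0 and every x* ∈ X_1: ∑_{k=1}^{n} (f_k(x_k^1) − f_k(x*)) ≤ G D² / (2(1−β_{11}) α_n) + (G² / (2√ε (1−β_{11}))) ∑_{k=1}^{n} α_k + (G D / (1−β_{11})) ∑_{k=1}^{n} β_{1k}. -/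
/-!
Nearest-point projection onto the convex set `X` does not increase the distance to `x* ∈ X`, so
with `η_k = α_k / √v̂_k` one has `‖x_{k+1} - x*‖² ≤ ‖x_k - x*‖² - 2η_k⟪m_k, x_k - x*⟫ + η_k²G²`.
Splitting `m_k = β_{1k} m_{k-1} + (1 - β_{1k}) g_k` and bounding the momentum part by `G D`
controls `⟪g_k, x_k - x*⟫`, hence by convexity `f_k(x_k) - f_k(x*)`, by a weighted difference
`b_k (‖x_k - x*‖² - ‖x_{k+1} - x*‖²)` plus error terms of order `α_k` and `β_{1k}`. The weights
`b_k = √v̂_k / (2α_k(1 - β_{1k}))` are nondecreasing, because `v̂` is and `α_k(1 - β_{1k})` is not,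
so the weighted sum telescopes to at most `b_n D²`.
-/

open scoped RealInnerProductSpace
open Finset
theorem ConvexOn.add_apply_sub_le_of_hasFDerivAt {E : Type*} [NormedAddCommGroup E]
    [NormedSpace ℝ E] {s : Set E} {f : E → ℝ} {f' : StrongDual ℝ E} {x y : E}
    (hf : ConvexOn ℝ s f) (hx : x ∈ s) (hy : y ∈ s) (hfx : HasFDerivAt f f' x) :
    f x + f' (y - x) ≤ f y := by
  set ℓ : ℝ →ᵃ[ℝ] E := AffineMap.lineMap x y
  have hline : HasDerivAt ℓ (y - x) 0 := AffineMap.hasDerivAt_lineMap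
  have hderiv : HasDerivAt (f ∘ ℓ) (f' (y - x)) 0 :=
    (by simpa [ℓ] using hfx : HasFDerivAt f f' (ℓ 0)).comp_hasDerivAt 0 hline
  have hslope := (hf.comp_affineMap ℓ).le_slope_of_hasDerivAt
    (by simpa [ℓ] using hx) (by simpa [ℓ] using hy) zero_lt_one hderiv
  simp only [slope, Function.comp_apply, ℓ, AffineMap.lineMap_apply_zero,
    AffineMap.lineMap_apply_one, sub_zero, inv_one, one_smul, vsub_eq_sub] at hslope
  linarith

theorem ConvexOn.sub_le_inner_of_hasGradientAt {H : Type*} [NormedAddCommGroup H]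
    [InnerProductSpace ℝ H] [CompleteSpace H] {s : Set H} {f : H → ℝ} {g x y : H}
    (hf : ConvexOn ℝ s f) (hx : x ∈ s) (hy : y ∈ s) (hfx : HasGradientAt f g x) :
    f x - f y ≤ ⟪g, x - y⟫ := by
  have := hf.add_apply_sub_le_of_hasFDerivAt hx hy hfx.hasFDerivAt
  rw [InnerProductSpace.toDual_apply_apply, ← neg_sub x y, inner_neg_right] at this
  linarith

theorem norm_sub_sq_le_of_forall_norm_sub_le {H : Type*} [NormedAddCommGroup H]
    [InnerProductSpace ℝ H] {K : Set H} (hK : Convex ℝ K) {u y w : H} (hu : u ∈ K) (hw : w ∈ K)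
    (hnearest : ∀ z ∈ K, ‖u - y‖ ≤ ‖z - y‖) : ‖u - w‖ ^ 2 ≤ ‖y - w‖ ^ 2 := by
  have hinf : ‖y - u‖ = ⨅ z : K, ‖y - z‖ := by
    have : Nonempty K := ⟨⟨u, hu⟩⟩
    refine le_antisymm (le_ciInf fun z => ?_) (ciInf_le (f := fun z : K => ‖y - z‖) ⟨0, ?_⟩ ⟨u, hu⟩)
    · simpa only [norm_sub_rev y] using hnearest z z.2
    · rintro r ⟨z, rfl⟩
      exact norm_nonneg _
  have hobtuse : ⟪y - u, w - u⟫ ≤ 0 := (norm_eq_iInf_iff_real_inner_le_zero hK hu).mp hinf w hw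
  have hexpand : ‖y - w‖ ^ 2 = ‖y - u‖ ^ 2 - 2 * ⟪y - u, w - u⟫ + ‖u - w‖ ^ 2 := by
    rw [← sub_add_sub_cancel y u w, norm_add_sq_real, ← neg_sub w u, inner_neg_right]
    ring
  nlinarith [sq_nonneg ‖y - u‖]

theorem Convex.forall_mem_of_recursion {E : Type*} [AddCommGroup E] [Module ℝ E] {s : Set E}
    (hs : Convex ℝ s) {u w : ℕ → E} {c : ℕ → ℝ} (hc : ∀ k, c (k + 1) ∈ Set.Icc 0 1)
    (h0 : u 0 ∈ s) (hw : ∀ k, w (k + 1) ∈ s)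
    (hu : ∀ k, u (k + 1) = c (k + 1) • u k + (1 - c (k + 1)) • w (k + 1)) (k : ℕ) : u k ∈ s := by
  induction k with
  | zero => exact h0
  | succ k ih =>
    rw [hu k]
    exact hs ih (hw k) (hc k).1 (by linarith [(hc k).2]) (by ring)

theorem vhat_le_of_amsgrad_recursion {v vhat w : ℕ → ℝ} {β₂ B : ℝ} (hβ₂ : β₂ ∈ Set.Icc 0 1)
    (hw : ∀ k, w (k + 1) ≤ B) (hv0 : v 0 ≤ B)
    (hv : ∀ k, v (k + 1) = β₂ * v k + (1 - β₂) * w (k + 1))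
    (hvhat0 : vhat 0 ≤ B) (hvhat : ∀ k, vhat (k + 1) = max (vhat k) (v (k + 1))) (k : ℕ) :
    vhat k ≤ B := by
  have hv_le (k : ℕ) : v k ≤ B :=
    (convex_Iic B).forall_mem_of_recursion (c := fun _ => β₂) (fun _ => hβ₂) hv0 hw
      (by simpa only [smul_eq_mul] using hv) k
  induction k with
  | zero => exact hvhat0
  | succ k ih => rw [hvhat k]; exact max_le ih (hv_le _)

theorem sum_Icc_mul_sub_succ_le {b Δ : ℕ → ℝ} {B : ℝ} {n : ℕ} (hn : 1 ≤ n) (hb : 0 ≤ b 1)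
    (hb_mono : ∀ k, 1 ≤ k → b k ≤ b (k + 1)) (hΔ : ∀ k, 1 ≤ k → Δ k ≤ B) (hΔ0 : ∀ k, 0 ≤ Δ k) :
    ∑ k ∈ Icc 1 n, b k * (Δ k - Δ (k + 1)) ≤ b n * B := by
  have hbn : 0 ≤ b n := by
    induction n, hn using Nat.le_induction with
    | base => exact hb
    | succ k hk ih => exact ih.trans (hb_mono k hk)
  -- Abel summation: the induction needs the boundary term `b n * Δ (n + 1)`.
  suffices h : ∑ k ∈ Icc 1 n, b k * (Δ k - Δ (k + 1)) ≤ b n * B - b n * Δ (n + 1) by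
    nlinarith [hΔ0 (n + 1)]
  clear hbn
  induction n, hn using Nat.le_induction with
  | base =>
    simp only [Icc_self, sum_singleton]
    nlinarith [hΔ 1 le_rfl]
  | succ k hk ih =>
    rw [sum_Icc_succ_top (by omega)]
    nlinarith [mul_nonneg (sub_nonneg.mpr (hb_mono k hk)) (sub_nonneg.mpr (hΔ (k + 1) (by omega)))]

theorem sum_Icc_div_mul_sub_succ_le {α β s Δ : ℕ → ℝ} {G B : ℝ} {n : ℕ} (hn : 1 ≤ n)
    (hα : ∀ k, 1 ≤ k → 0 < α k) (hβ : ∀ k, 1 ≤ k → β k < 1) (hβn : β n ≤ β 1)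
    (hαβ : ∀ k, 1 ≤ k → α (k + 1) * (1 - β (k + 1)) ≤ α k * (1 - β k))
    (hs : Monotone s) (hs0 : 0 ≤ s 1) (hsG : s n ≤ G)
    (hΔ : ∀ k, 1 ≤ k → Δ k ≤ B) (hΔ0 : ∀ k, 0 ≤ Δ k) :
    ∑ k ∈ Icc 1 n, s k / (2 * α k * (1 - β k)) * (Δ k - Δ (k + 1))
      ≤ G * B / (2 * (1 - β 1) * α n) := by
  have hc (k : ℕ) (hk : 1 ≤ k) : 0 < 2 * α k * (1 - β k) :=
    mul_pos (mul_pos two_pos (hα k hk)) (sub_pos.mpr (hβ k hk))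
  have hB : 0 ≤ B := (hΔ0 1).trans (hΔ 1 le_rfl)
  calc ∑ k ∈ Icc 1 n, s k / (2 * α k * (1 - β k)) * (Δ k - Δ (k + 1))
      ≤ s n / (2 * α n * (1 - β n)) * B :=
        sum_Icc_mul_sub_succ_le hn (div_nonneg hs0 (hc 1 le_rfl).le)
          (fun k hk => div_le_div₀ (hs0.trans (hs (by omega))) (hs k.le_succ)
            (hc (k + 1) (by omega)) (by linarith [hαβ k hk]))
          hΔ hΔ0
    _ ≤ G / (2 * α n * (1 - β 1)) * B := by
        have := sub_pos.mpr (hβ 1 le_rfl)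
        have := hα n hn
        have : 0 ≤ G := hs0.trans ((hs hn).trans hsG)
        gcongr
    _ = G * B / (2 * (1 - β 1) * α n) := by ring

theorem two_mul_inner_le_of_momentum_projection {H : Type*} [NormedAddCommGroup H]
    [InnerProductSpace ℝ H] {X : Set H} (hX : Convex ℝ X) {x x' xs m m' g : H} {η β G D : ℝ}
    (hx' : x' ∈ X) (hxs : xs ∈ X) (hnearest : ∀ z ∈ X, ‖x' - (x - η • m)‖ ≤ ‖z - (x - η • m)‖)
    (hm : m = β • m' + (1 - β) • g) (hη : 0 ≤ η) (hβ : 0 ≤ β) (hmG : ‖m‖ ≤ G) (hm'G : ‖m'‖ ≤ G)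
    (hxD : ‖x - xs‖ ≤ D) :
    2 * η * (1 - β) * ⟪g, x - xs⟫
      ≤ ‖x - xs‖ ^ 2 - ‖x' - xs‖ ^ 2 + η ^ 2 * G ^ 2 + 2 * η * β * (G * D) := by
  have hproj := norm_sub_sq_le_of_forall_norm_sub_le hX hx' hxs hnearest
  have hexpand : ‖x - η • m - xs‖ ^ 2 = ‖x - xs‖ ^ 2 - 2 * η * ⟪x - xs, m⟫ + η ^ 2 * ‖m‖ ^ 2 := by
    rw [sub_right_comm, norm_sub_sq_real, real_inner_smul_right, norm_smul, Real.norm_eq_abs,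
      mul_pow, sq_abs]
    ring
  have hsplit : ⟪x - xs, m⟫ = β * ⟪x - xs, m'⟫ + (1 - β) * ⟪g, x - xs⟫ := by
    rw [hm, inner_add_right, real_inner_smul_right, real_inner_smul_right, real_inner_comm g]
  have hm'_inner : -(G * D) ≤ ⟪x - xs, m'⟫ := by
    have := abs_le.mp ((abs_real_inner_le_norm _ _).trans (mul_le_mul hxD hm'G (norm_nonneg _)
      ((norm_nonneg _).trans hxD)))
    linarith [mul_comm D G]
  have hm_sq : ‖m‖ ^ 2 ≤ G ^ 2 := pow_le_pow_left₀ (norm_nonneg _) hmG 2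
  nlinarith [mul_le_mul_of_nonneg_left hm'_inner (by positivity : 0 ≤ 2 * η * β),
    mul_le_mul_of_nonneg_left hm_sq (sq_nonneg η)]

theorem inner_le_of_amsgrad_step {H : Type*} [NormedAddCommGroup H] [InnerProductSpace ℝ H]
    {X : Set H} (hX : Convex ℝ X) {x x' xs m m' g : H} {α s ε β β₀ G D : ℝ}
    (hx' : x' ∈ X) (hxs : xs ∈ X)
    (hnearest : ∀ z ∈ X, ‖x' - (x - (α / s) • m)‖ ≤ ‖z - (x - (α / s) • m)‖)
    (hm : m = β • m' + (1 - β) • g) (hα : 0 < α) (hε : 0 < ε) (hs : √ε ≤ s) (hβ : 0 ≤ β)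
    (hββ₀ : β ≤ β₀) (hβ₀ : β₀ < 1) (hmG : ‖m‖ ≤ G) (hm'G : ‖m'‖ ≤ G) (hxD : ‖x - xs‖ ≤ D) :
    ⟪g, x - xs⟫ ≤ s / (2 * α * (1 - β)) * (‖x - xs‖ ^ 2 - ‖x' - xs‖ ^ 2)
      + G ^ 2 / (2 * √ε * (1 - β₀)) * α + G * D / (1 - β₀) * β := by
  have hs0 : 0 < s := (Real.sqrt_pos.mpr hε).trans_le hs
  have hc : 0 < 1 - β := by linarith
  have hstep := two_mul_inner_le_of_momentum_projection hX hx' hxs hnearest hm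
    (div_pos hα hs0).le hβ hmG hm'G hxD
  calc ⟪g, x - xs⟫
      ≤ (‖x - xs‖ ^ 2 - ‖x' - xs‖ ^ 2 + (α / s) ^ 2 * G ^ 2 + 2 * (α / s) * β * (G * D))
          / (2 * (α / s) * (1 - β)) := by
        rw [le_div_iff₀ (mul_pos (by positivity) hc)]
        linarith
    _ = s / (2 * α * (1 - β)) * (‖x - xs‖ ^ 2 - ‖x' - xs‖ ^ 2)
          + G ^ 2 / (2 * s * (1 - β)) * α + G * D / (1 - β) * β := by
        field_simp
    _ ≤ _ := by
        have hGD : 0 ≤ G * D := mul_nonneg ((norm_nonneg _).trans hmG) ((norm_nonneg _).trans hxD)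
        gcongr

theorem stmt11_general {H : Type*} [NormedAddCommGroup H] [InnerProductSpace ℝ H] [CompleteSpace H]
    (X : Set H) (hXcv : Convex ℝ X)
    (D : ℝ) (hdiam : ∀ u ∈ X, ∀ v ∈ X, ‖u - v‖ ≤ D)
    (G : ℝ) (hG : 0 ≤ G) (ε : ℝ) (hε : 0 < ε) (hεG : ε ≤ G ^ 2)
    (β₂ : ℝ) (hβ₂ : β₂ ∈ Set.Ico (0 : ℝ) 1)
    (β₁ : ℕ → ℝ) (hβ₁ : ∀ k, 1 ≤ k → β₁ k ∈ Set.Ico (0 : ℝ) 1)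
    (hβ₁mono : ∀ k, 1 ≤ k → β₁ (k + 1) ≤ β₁ k)
    (α : ℕ → ℝ) (hα : ∀ k, 1 ≤ k → 0 < α k)
    (hαβ : ∀ k, 1 ≤ k → α (k + 1) * (1 - β₁ (k + 1)) ≤ α k * (1 - β₁ k))
    (g : ℕ → H) (hg : ∀ k, 1 ≤ k → ‖g k‖ ≤ G)
    (m : ℕ → H) (hm0 : m 0 = 0)
    (hm : ∀ k : ℕ, m (k + 1) = β₁ (k + 1) • m k + (1 - β₁ (k + 1)) • g (k + 1))
    (v : ℕ → ℝ) (hv0 : v 0 = 0)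
    (hv : ∀ k : ℕ, v (k + 1) = β₂ * v k + (1 - β₂) * ‖g (k + 1)‖ ^ 2)
    (vhat : ℕ → ℝ) (hvhat0 : vhat 0 = ε)
    (hvhat : ∀ k : ℕ, vhat (k + 1) = max (vhat k) (v (k + 1)))
    (x : ℕ → H) (hx1 : x 1 ∈ X)
    (hxX : ∀ k, 1 ≤ k → x (k + 1) ∈ X)
    (hxproj : ∀ k, 1 ≤ k → ∀ z ∈ X,
      ‖x (k + 1) - (x k - (α k / Real.sqrt (vhat k)) • m k)‖
        ≤ ‖z - (x k - (α k / Real.sqrt (vhat k)) • m k)‖)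
    (f : ℕ → H → ℝ) (hfconv : ∀ k, 1 ≤ k → ConvexOn ℝ Set.univ (f k))
    (hfgrad : ∀ k, 1 ≤ k → HasGradientAt (f k) (g k) (x k))
    (n : ℕ) (hn : 1 ≤ n) (xs : H) (hxs : xs ∈ X) :
    ∑ k ∈ Finset.Icc 1 n, (f k (x k) - f k xs)
      ≤ G * D ^ 2 / (2 * (1 - β₁ 1) * α n)
        + (G ^ 2 / (2 * Real.sqrt ε * (1 - β₁ 1))) * ∑ k ∈ Finset.Icc 1 n, α k
        + (G * D / (1 - β₁ 1)) * ∑ k ∈ Finset.Icc 1 n, β₁ k := by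
  have hm_le (k : ℕ) : ‖m k‖ ≤ G := mem_closedBall_zero_iff.mp <|
    (convex_closedBall 0 G).forall_mem_of_recursion
      (fun k => Set.Ico_subset_Icc_self (hβ₁ (k + 1) k.succ_pos)) (by simpa [hm0] using hG)
      (fun k => mem_closedBall_zero_iff.mpr (hg (k + 1) k.succ_pos)) hm k
  have hvhat_mono : Monotone vhat := monotone_nat_of_le_succ fun k => hvhat k ▸ le_max_left _ _
  have hsqrt_ge (k : ℕ) : √ε ≤ √(vhat k) := Real.sqrt_le_sqrt (hvhat0 ▸ hvhat_mono k.zero_le)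
  have hsqrt_le (k : ℕ) : √(vhat k) ≤ G := by
    refine (Real.sqrt_le_sqrt ?_).trans_eq (Real.sqrt_sq hG)
    exact vhat_le_of_amsgrad_recursion (w := fun k => ‖g k‖ ^ 2) (Set.Ico_subset_Icc_self hβ₂)
      (fun k => pow_le_pow_left₀ (norm_nonneg _) (hg (k + 1) k.succ_pos) 2)
      (by rw [hv0]; positivity) hv (hvhat0 ▸ hεG) hvhat k
  have hx_mem : ∀ k, 1 ≤ k → x k ∈ X := Nat.le_induction hx1 fun k hk _ => hxX k hk
  have hβ₁_le : ∀ k, 1 ≤ k → β₁ k ≤ β₁ 1 :=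
    Nat.le_induction le_rfl fun k hk ih => (hβ₁mono k hk).trans ih
  have hstep : ∀ k ∈ Finset.Icc 1 n, f k (x k) - f k xs
      ≤ √(vhat k) / (2 * α k * (1 - β₁ k)) * (‖x k - xs‖ ^ 2 - ‖x (k + 1) - xs‖ ^ 2)
        + G ^ 2 / (2 * √ε * (1 - β₁ 1)) * α k + G * D / (1 - β₁ 1) * β₁ k := by
    intro k hk
    obtain ⟨j, rfl⟩ : ∃ j, k = j + 1 := ⟨k - 1, by grind⟩
    have hk : 1 ≤ j + 1 := j.succ_pos
    exact ((hfconv _ hk).sub_le_inner_of_hasGradientAt (Set.mem_univ _) (Set.mem_univ _)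
      (hfgrad _ hk)).trans <| inner_le_of_amsgrad_step hXcv (hxX _ hk) hxs (hxproj _ hk) (hm j)
        (hα _ hk) hε (hsqrt_ge _) (hβ₁ _ hk).1 (hβ₁_le _ hk) (hβ₁ 1 le_rfl).2 (hm_le _) (hm_le _)
        (hdiam _ (hx_mem _ hk) _ hxs)
  have htelescope := sum_Icc_div_mul_sub_succ_le hn hα (fun k hk => (hβ₁ k hk).2) (hβ₁_le n hn)
    hαβ (fun _ _ hij => Real.sqrt_le_sqrt (hvhat_mono hij)) (Real.sqrt_nonneg _) (hsqrt_le n)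
    (fun k hk => pow_le_pow_left₀ (norm_nonneg _) (hdiam _ (hx_mem k hk) _ hxs) 2)
    (fun k => sq_nonneg ‖x k - xs‖)
  calc ∑ k ∈ Finset.Icc 1 n, (f k (x k) - f k xs)
      ≤ ∑ k ∈ Finset.Icc 1 n,
          √(vhat k) / (2 * α k * (1 - β₁ k)) * (‖x k - xs‖ ^ 2 - ‖x (k + 1) - xs‖ ^ 2)
        + G ^ 2 / (2 * √ε * (1 - β₁ 1)) * ∑ k ∈ Finset.Icc 1 n, α k
        + G * D / (1 - β₁ 1) * ∑ k ∈ Finset.Icc 1 n, β₁ k := by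
        simpa only [Finset.sum_add_distrib, Finset.mul_sum] using Finset.sum_le_sum hstep
    _ ≤ _ := by linarith

/-- A regret bound for convex losses (Hilbert-space analogue of the content of the paper's
Theorem 2), for the AMSGrad-type iteration (Algorithm 1) with `N = 1`: the convex loss
functions `f k` have gradient `g k` at the iterate `x k`, and the linearized bound combined
with convexity yields the regret bound. -/
theorem stmt11 {H : Type*} [NormedAddCommGroup H] [InnerProductSpace ℝ H] [CompleteSpace H]
    (X : Set H) (hXne : X.Nonempty) (hXcl : IsClosed X) (hXcv : Convex ℝ X)
    (D : ℝ) (hD : 0 ≤ D) (hdiam : ∀ u ∈ X, ∀ v ∈ X, ‖u - v‖ ≤ D)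
    (G : ℝ) (hG : 0 ≤ G) (ε : ℝ) (hε : 0 < ε) (hεG : ε ≤ G ^ 2)
    (β₂ : ℝ) (hβ₂ : β₂ ∈ Set.Ico (0 : ℝ) 1)
    (β₁ : ℕ → ℝ) (hβ₁ : ∀ k, 1 ≤ k → β₁ k ∈ Set.Ico (0 : ℝ) 1)
    (hβ₁mono : ∀ k, 1 ≤ k → β₁ (k + 1) ≤ β₁ k)
    (α : ℕ → ℝ) (hα : ∀ k, 1 ≤ k → 0 < α k)
    (hαβ : ∀ k, 1 ≤ k → α (k + 1) * (1 - β₁ (k + 1)) ≤ α k * (1 - β₁ k))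
    (g : ℕ → H) (hg : ∀ k, 1 ≤ k → ‖g k‖ ≤ G)
    (m : ℕ → H) (hm0 : m 0 = 0)
    (hm : ∀ k : ℕ, m (k + 1) = β₁ (k + 1) • m k + (1 - β₁ (k + 1)) • g (k + 1))
    (v : ℕ → ℝ) (hv0 : v 0 = 0)
    (hv : ∀ k : ℕ, v (k + 1) = β₂ * v k + (1 - β₂) * ‖g (k + 1)‖ ^ 2)
    (vhat : ℕ → ℝ) (hvhat0 : vhat 0 = ε)
    (hvhat : ∀ k : ℕ, vhat (k + 1) = max (vhat k) (v (k + 1)))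
    (x : ℕ → H) (hx1 : x 1 ∈ X)
    (hxX : ∀ k, 1 ≤ k → x (k + 1) ∈ X)
    (hxproj : ∀ k, 1 ≤ k → ∀ z ∈ X,
      ‖x (k + 1) - (x k - (α k / Real.sqrt (vhat k)) • m k)‖
        ≤ ‖z - (x k - (α k / Real.sqrt (vhat k)) • m k)‖)
    (f : ℕ → H → ℝ) (hfconv : ∀ k, 1 ≤ k → ConvexOn ℝ Set.univ (f k))
    (hfgrad : ∀ k, 1 ≤ k → HasGradientAt (f k) (g k) (x k))
    (n : ℕ) (hn : 1 ≤ n) (xs : H) (hxs : xs ∈ X) :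
    ∑ k ∈ Finset.Icc 1 n, (f k (x k) - f k xs)
      ≤ G * D ^ 2 / (2 * (1 - β₁ 1) * α n)
        + (G ^ 2 / (2 * Real.sqrt ε * (1 - β₁ 1))) * ∑ k ∈ Finset.Icc 1 n, α k
        + (G * D / (1 - β₁ 1)) * ∑ k ∈ Finset.Icc 1 n, β₁ k :=
  stmt11_general X hXcv D hdiam G hG ε hε hεG β₂ hβ₂ β₁ hβ₁ hβ₁mono α hα hαβ g hg m hm0 hm v hv0 hv
    vhat hvhat0 hvhat x hx1 hxX hxproj f hfconv hfgrad n hn xs hxs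
end
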